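/- arXiv:2410.15652 — 4 statements merged into one kernel-verified Lean document; each statement's English description precedes it below -/
import Mathlib

section
/- Fix a real number α ∈ (1,∞). There exist constants C_α > 0 and c_α > 0 depending only on α such that the following holds for every n ≥ 1. Let X = (X_1,…,X_n) be a random vector with independent centered sparse α-subexponential components with sparsity parameters p_1,…,p_n ∈ (0,1] and constant K > 0, let a = (a_1,…,a_n) ∈ ℝⁿ be a nonzero deterministic vector, and set λ² := Σ_{i=1}^n a_i² p_i. Then for every t > 0 with t ‖a‖_∞ ≥ e · c_α · K λ², P( |Σ_{i=1}^n a_i X_i| > t ) ≤ e² · exp( − C_α · ( t / (K ‖a‖_∞) ) · [ log( t ‖a‖_∞ / (c_α K λ²) ) ]^{1 − 1/α} ). -/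
open MeasureTheory ProbabilityTheory Finset Real

open scoped Nat ENNReal


lemma exp_series_shift (x : ℝ) :
    Real.exp x = 1 + x + ∑' k : ℕ, x ^ (k + 2) / (k + 2)! := by
  have hsum := Real.summable_pow_div_factorial x
  have h := (hsum.sum_add_tsum_nat_add 2).symm
  rw [Real.exp_eq_exp_ℝ, NormedSpace.exp_eq_tsum_div]
  show (∑' n : ℕ, x ^ n / n !) = _
  rw [h]
  norm_num [Finset.sum_range_succ]

lemma exp_le_linear_add (y : ℝ) : Real.exp y ≤ 1 + y + (Real.exp |y| - 1 - |y|) := by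
  rcases le_or_gt 0 y with h | h
  · rw [abs_of_nonneg h]; ring_nf; exact le_refl _
  · rw [abs_of_neg h]
    have h1 : (-y) ≤ Real.sinh (-y) := Real.self_le_sinh_iff.2 (by linarith)
    rw [Real.sinh_eq] at h1
    ring_nf
    ring_nf at h1
    linarith

lemma pow_div_factorial_le_exp (m : ℕ) : (m : ℝ) ^ m / m ! ≤ Real.exp m := by
  refine le_trans ?_ (Real.sum_le_exp_of_nonneg (Nat.cast_nonneg m) (m + 1))
  have : ∀ i ∈ Finset.range (m + 1), (0:ℝ) ≤ (m:ℝ) ^ i / i ! := by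
    intro i _
    positivity
  exact Finset.single_le_sum this (Finset.self_mem_range_succ m)

lemma maxterm (γ u : ℝ) (hγ0 : 0 < γ) (hu : 0 < u) (m : ℕ) (hm : 1 ≤ m) :
    (Real.exp 1 * u / (m : ℝ) ^ γ) ^ m ≤
      Real.exp (γ * Real.exp ((1 - γ) / γ) * u ^ (1 / γ)) := by
  set x := Real.exp ((1 - γ) / γ) * u ^ (1 / γ) with hx
  have hm0 : (0:ℝ) < (m:ℝ) := by exact_mod_cast Nat.lt_of_lt_of_le Nat.zero_lt_one hm
  have hxpos : 0 < x := by
    apply mul_pos (Real.exp_pos _) (Real.rpow_pos_of_pos hu _)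
  have hbpos : 0 < Real.exp 1 * u / (m : ℝ) ^ γ := by
    apply div_pos (mul_pos (Real.exp_pos _) hu) (Real.rpow_pos_of_pos hm0 _)
  -- log form
  rw [← Real.exp_log hbpos, ← Real.exp_nat_mul, Real.exp_le_exp]
  have hlogb : Real.log (Real.exp 1 * u / (m : ℝ) ^ γ)
      = 1 + Real.log u - γ * Real.log m := by
    rw [Real.log_div (by positivity) (by positivity), Real.log_mul (by positivity) hu.ne',
      Real.log_exp, Real.log_rpow hm0]
  -- key : log x - log m ≤ x / m - 1
  have hkey : Real.log x - Real.log m ≤ x / m - 1 := by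
    have := Real.log_le_sub_one_of_pos (show 0 < x / m by positivity)
    rwa [Real.log_div hxpos.ne' hm0.ne'] at this
  have hlogx : γ * Real.log x = 1 - γ + Real.log u := by
    rw [hx, Real.log_mul (Real.exp_pos _).ne' (Real.rpow_pos_of_pos hu _).ne',
      Real.log_exp, Real.log_rpow hu]
    field_simp
  rw [hlogb]
  have h1 : (m:ℝ) * (1 + Real.log u - γ * Real.log m)
      ≤ (m:ℝ) * (1 + Real.log u - γ * Real.log x - γ) + γ * x := by
    have h2 : γ * Real.log x - γ * Real.log m ≤ γ * (x / m) - γ := by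
      have := mul_le_mul_of_nonneg_left hkey hγ0.le
      nlinarith [this]
    have h3 : (m:ℝ) * (γ * (x / m)) = γ * x := by field_simp
    nlinarith [mul_le_mul_of_nonneg_left h2 hm0.le]
  calc (m:ℝ) * (1 + Real.log u - γ * Real.log m)
      ≤ (m:ℝ) * (1 + Real.log u - γ * Real.log x - γ) + γ * x := h1
    _ = γ * x := by rw [hlogx]; ring
    _ = γ * Real.exp ((1 - γ) / γ) * u ^ (1 / γ) := by rw [hx]; ring

lemma term_le (γ : ℝ) (hγ0 : 0 < γ) (hγ1 : γ < 1) (u : ℝ) (hu : 0 < u)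
    (m : ℕ) (hm : 2 ≤ m) :
    (u * (m : ℝ) ^ (1 - γ)) ^ m / m ! ≤
      (Real.exp (γ * Real.exp ((1 - γ) / γ) * u ^ (1 / γ))
        * 2 ^ (⌈(2 * Real.exp 1 * u) ^ (1 / γ)⌉₊ + 2)) * (1 / 2 : ℝ) ^ m := by
  have hm1 : 1 ≤ m := le_trans one_le_two hm
  have hm0 : (0:ℝ) < (m:ℝ) := by exact_mod_cast Nat.lt_of_lt_of_le Nat.zero_lt_one hm1
  set N := ⌈(2 * Real.exp 1 * u) ^ (1 / γ)⌉₊ with hN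
  set E := Real.exp (γ * Real.exp ((1 - γ) / γ) * u ^ (1 / γ)) with hE
  have hE1 : 1 ≤ E := Real.one_le_exp (by positivity)
  -- Step 1 : LHS ≤ (e u / m^γ)^m
  have hkey : Real.exp 1 * u / (m:ℝ) ^ γ = u * (m:ℝ) ^ (1 - γ) * Real.exp 1 / (m:ℝ) := by
    rw [Real.rpow_sub hm0, Real.rpow_one]
    field_simp
  have h1 : (u * (m : ℝ) ^ (1 - γ)) ^ m / m ! ≤ (Real.exp 1 * u / (m:ℝ) ^ γ) ^ m := by
    rw [hkey, div_pow, mul_pow (u * (m:ℝ) ^ (1 - γ)) (Real.exp 1)]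
    have hfac : (m:ℝ) ^ m ≤ (m ! : ℝ) * Real.exp 1 ^ m := by
      have h0 := Real.pow_div_factorial_le_exp (m:ℝ) (Nat.cast_nonneg m) m
      rw [← Real.exp_one_pow] at h0
      have hf : (0:ℝ) < (m ! : ℝ) := by exact_mod_cast m.factorial_pos
      calc (m:ℝ) ^ m = ((m:ℝ) ^ m / m !) * m ! := by field_simp
        _ ≤ Real.exp 1 ^ m * m ! := mul_le_mul_of_nonneg_right h0 hf.le
        _ = (m ! : ℝ) * Real.exp 1 ^ m := by ring
    rw [div_le_div_iff₀ (by exact_mod_cast m.factorial_pos) (by positivity)]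
    calc (u * (m:ℝ) ^ (1 - γ)) ^ m * (m:ℝ) ^ m
        ≤ (u * (m:ℝ) ^ (1 - γ)) ^ m * ((m ! : ℝ) * Real.exp 1 ^ m) :=
          mul_le_mul_of_nonneg_left hfac (by positivity)
      _ = (u * (m:ℝ) ^ (1 - γ)) ^ m * Real.exp 1 ^ m * m ! := by ring

  refine h1.trans ?_
  by_cases hc : Real.exp 1 * u / (m:ℝ) ^ γ ≤ 1/2
  · have h2 : (Real.exp 1 * u / (m:ℝ) ^ γ) ^ m ≤ (1/2 : ℝ) ^ m :=
      pow_le_pow_left₀ (by positivity) hc m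
    refine h2.trans ?_
    have h2N : (1:ℝ) ≤ 2 ^ (N + 2) := by
      calc (1:ℝ) = 1 ^ (N+2) := (one_pow _).symm
        _ ≤ 2 ^ (N+2) := pow_le_pow_left₀ zero_le_one one_le_two _
    refine le_mul_of_one_le_left (by positivity) ?_
    nlinarith
  · push_neg at hc
    have hp : (0:ℝ) < (m:ℝ) ^ γ := Real.rpow_pos_of_pos hm0 _
    have hmγ : (m:ℝ) ^ γ < 2 * Real.exp 1 * u := by
      rw [lt_div_iff₀ hp] at hc
      linarith
    have hmN : m < N := by
      rw [hN, Nat.lt_ceil]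
      have h3 : ((m:ℝ) ^ γ) ^ (1/γ) < (2 * Real.exp 1 * u) ^ (1/γ) :=
        Real.rpow_lt_rpow (by positivity) hmγ (by positivity)
      have h4 : ((m:ℝ) ^ γ) ^ (1/γ) = (m:ℝ) := by
        rw [← Real.rpow_mul hm0.le]
        rw [mul_one_div, div_self hγ0.ne', Real.rpow_one]
      rwa [h4] at h3
    have h5 : (1:ℝ) ≤ 2 ^ (N + 2) * (1/2:ℝ) ^ m := by
      have h2m : (2:ℝ) ^ m ≤ 2 ^ (N+2) := pow_le_pow_right₀ one_le_two (by omega)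
      have heq : (2:ℝ) ^ (N+2) * (1/2:ℝ) ^ m = 2 ^ (N+2) / 2 ^ m := by
        rw [one_div, inv_pow, div_eq_mul_inv]
      rw [heq, le_div_iff₀ (by positivity), one_mul]
      exact h2m
    calc (Real.exp 1 * u / (m:ℝ) ^ γ) ^ m ≤ E := maxterm γ u hγ0 hu m hm1
      _ = E * 1 := (mul_one E).symm
      _ ≤ E * (2 ^ (N+2) * (1/2:ℝ) ^ m) :=
          mul_le_mul_of_nonneg_left h5 (by linarith)
      _ = (E * 2 ^ (N+2)) * (1/2:ℝ) ^ m := by ring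

lemma integrable_exp_of_moments {Ω : Type} [MeasurableSpace Ω] (μ : Measure Ω)
    (Y : Ω → ℝ) (hY : Measurable Y) (hYnn : ∀ ω, 0 ≤ Y ω)
    (hint : ∀ k : ℕ, Integrable (fun ω => Y ω ^ k / k !) μ)
    (hsum : Summable (fun k : ℕ => ∫ ω, Y ω ^ k / (k ! : ℝ) ∂μ)) :
    Integrable (fun ω => Real.exp (Y ω)) μ := by
  refine ⟨(Real.measurable_exp.comp hY).aestronglyMeasurable, ?_⟩
  rw [hasFiniteIntegral_iff_norm]
  have heq : ∀ ω, ENNReal.ofReal ‖Real.exp (Y ω)‖ =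
      ∑' k : ℕ, ENNReal.ofReal (Y ω ^ k / k !) := by
    intro ω
    rw [Real.norm_eq_abs, abs_of_pos (Real.exp_pos _)]
    have hser : Real.exp (Y ω) = ∑' k : ℕ, Y ω ^ k / k ! := by
      rw [Real.exp_eq_exp_ℝ, NormedSpace.exp_eq_tsum_div]
    rw [hser, ENNReal.ofReal_tsum_of_nonneg (fun k => div_nonneg (pow_nonneg (hYnn ω) k) (by positivity))
      (Real.summable_pow_div_factorial _)]
  calc ∫⁻ ω, ENNReal.ofReal ‖Real.exp (Y ω)‖ ∂μ
      = ∫⁻ ω, ∑' k : ℕ, ENNReal.ofReal (Y ω ^ k / k !) ∂μ := lintegral_congr heq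
    _ = ∑' k : ℕ, ∫⁻ ω, ENNReal.ofReal (Y ω ^ k / k !) ∂μ := by
        refine lintegral_tsum fun k => ?_
        exact (ENNReal.measurable_ofReal.comp ((hY.pow_const k).div_const _)).aemeasurable
    _ = ∑' k : ℕ, ENNReal.ofReal (∫ ω, Y ω ^ k / (k ! : ℝ) ∂μ) := by
        refine tsum_congr fun k => ?_
        rw [MeasureTheory.ofReal_integral_eq_lintegral_ofReal (hint k)
          (Filter.Eventually.of_forall fun ω => div_nonneg (pow_nonneg (hYnn ω) k) (by positivity))]
    _ = ENNReal.ofReal (∑' k : ℕ, ∫ ω, Y ω ^ k / (k ! : ℝ) ∂μ) :=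
        (ENNReal.ofReal_tsum_of_nonneg
          (fun k => integral_nonneg fun ω => div_nonneg (pow_nonneg (hYnn ω) k) (by positivity)) hsum).symm
    _ < ⊤ := ENNReal.ofReal_lt_top

lemma per_coord {Ω : Type} [MeasurableSpace Ω] (μ : Measure Ω) [IsProbabilityMeasure μ]
    (α γ : ℝ) (hα : 1 < α) (hγ : γ = 1 - 1/α)
    (Y : Ω → ℝ) (hYm : Measurable Y) (hcen : ∫ ω, Y ω ∂μ = 0)
    (pi K : ℝ) (hpi : 0 < pi) (hK : 0 < K)
    (hmom : ∀ r : ℝ, 1 ≤ r → Integrable (fun ω => |Y ω| ^ r) μ ∧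
      ∫ ω, |Y ω| ^ r ∂μ ≤ pi * (K * r ^ (1/α)) ^ r)
    (ai M s u : ℝ) (hM : 0 < M) (haiM : |ai| ≤ M) (hs : 0 < s)
    (hu : s * (K * M) = u) :
    Integrable (fun ω => Real.exp (s * (ai * Y ω))) μ ∧
    mgf (fun ω => ai * Y ω) μ s ≤
      1 + pi * (ai/M)^2 * (Real.exp ((γ * Real.exp ((1-γ)/γ)) * u ^ (1/γ))
        * 2 ^ (⌈(2*Real.exp 1*u)^(1/γ)⌉₊ + 2)) := by
  have hγ0 : 0 < γ := by
    rw [hγ]; have : 1/α < 1 := by rw [div_lt_one (by linarith)]; linarith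
    linarith
  have hγ1 : γ < 1 := by
    rw [hγ]; have : 0 < 1/α := by positivity
    linarith
  have hupos : 0 < u := by rw [← hu]; positivity
  set Q := Real.exp ((γ * Real.exp ((1-γ)/γ)) * u ^ (1/γ))
      * 2 ^ (⌈(2*Real.exp 1*u)^(1/γ)⌉₊ + 2) with hQ
  have hQpos : 0 < Q := by positivity
  set b := s * |ai| with hb
  have hbnn : 0 ≤ b := by positivity
  -- integrability of powers
  have habs : Integrable (fun ω => |Y ω|) μ := by
    have h := (hmom 1 le_rfl).1
    simpa using h
  have hYint : Integrable Y μ := by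
    refine habs.mono' hYm.aestronglyMeasurable ?_
    filter_upwards with ω
    rw [Real.norm_eq_abs]
  have hpowint : ∀ k : ℕ, 1 ≤ k → Integrable (fun ω => |Y ω| ^ k) μ := by
    intro k hk
    have h := (hmom (k:ℝ) (by exact_mod_cast hk)).1
    refine h.congr ?_
    filter_upwards with ω
    rw [Real.rpow_natCast]
  -- integrability of each series term
  have hgint : ∀ k : ℕ, Integrable (fun ω => (b * |Y ω|) ^ k / (k ! : ℝ)) μ := by
    intro k
    rcases Nat.eq_zero_or_pos k with hk | hk
    · subst hk; simp
    · have heq : (fun ω => (b * |Y ω|) ^ k / (k ! : ℝ))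
          = fun ω => (b ^ k / (k ! : ℝ)) * |Y ω| ^ k := by
        funext ω; rw [mul_pow]; ring
      rw [heq]
      exact (hpowint k hk).const_mul _
  -- the value bound on each term with index ≥ 2
  have hgle : ∀ k : ℕ, 2 ≤ k →
      ∫ ω, (b * |Y ω|) ^ k / (k ! : ℝ) ∂μ ≤ pi * (ai/M)^2 * (Q * (1/2:ℝ)^k) := by
    intro k hk
    have hk1 : (1:ℝ) ≤ (k:ℝ) := by exact_mod_cast le_trans one_le_two hk
    have hmomk := (hmom (k:ℝ) hk1).2
    have hmomk' : ∫ ω, |Y ω| ^ k ∂μ ≤ pi * (K * (k:ℝ) ^ (1/α)) ^ k := by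
      calc ∫ ω, |Y ω| ^ k ∂μ = ∫ ω, |Y ω| ^ ((k:ℕ):ℝ) ∂μ := by
            refine integral_congr_ae ?_
            filter_upwards with ω
            rw [Real.rpow_natCast]
        _ ≤ pi * (K * (k:ℝ) ^ (1/α)) ^ ((k:ℕ):ℝ) := hmomk
        _ = pi * (K * (k:ℝ) ^ (1/α)) ^ k := by rw [Real.rpow_natCast]
      
    have hintval : ∫ ω, (b * |Y ω|) ^ k / (k ! : ℝ) ∂μ
        = (b ^ k / (k ! : ℝ)) * ∫ ω, |Y ω| ^ k ∂μ := by
      rw [← integral_const_mul]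
      refine integral_congr_ae ?_
      filter_upwards with ω
      rw [mul_pow]; ring
    rw [hintval]
    have hfk : (0:ℝ) < (k ! : ℝ) := by exact_mod_cast k.factorial_pos
    have step1 : (b ^ k / (k ! : ℝ)) * ∫ ω, |Y ω| ^ k ∂μ
        ≤ (b ^ k / (k ! : ℝ)) * (pi * (K * (k:ℝ) ^ (1/α)) ^ k) := by
      refine mul_le_mul_of_nonneg_left hmomk' (by positivity)
    refine step1.trans ?_
    -- rearrange : b^k (K k^{1/α})^k = (|ai|/M)^k (u k^{1/α})^k
    have hbK : b * K = (|ai|/M) * u := by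
      rw [hb, ← hu]; field_simp
    have key : (b ^ k / (k ! : ℝ)) * (pi * (K * (k:ℝ) ^ (1/α)) ^ k)
        = pi * (|ai|/M) ^ k * ((u * (k:ℝ) ^ (1/α)) ^ k / (k ! : ℝ)) := by
      have h2 : b ^ k * (K * (k:ℝ) ^ (1/α)) ^ k
          = (|ai|/M)^k * (u * (k:ℝ) ^ (1/α))^k := by
        rw [← mul_pow, ← mul_pow]
        congr 1
        rw [← mul_assoc, hbK]; ring
      calc (b ^ k / (k ! : ℝ)) * (pi * (K * (k:ℝ) ^ (1/α)) ^ k)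
          = pi * (b ^ k * (K * (k:ℝ) ^ (1/α)) ^ k) / (k ! : ℝ) := by ring
        _ = pi * ((|ai|/M)^k * (u * (k:ℝ) ^ (1/α))^k) / (k ! : ℝ) := by rw [h2]
        _ = pi * (|ai|/M) ^ k * ((u * (k:ℝ) ^ (1/α)) ^ k / (k ! : ℝ)) := by ring
    rw [key]
    have hterm : (u * (k:ℝ) ^ (1/α)) ^ k / (k ! : ℝ) ≤ Q * (1/2:ℝ)^k := by
      have h := term_le γ hγ0 hγ1 u hupos k hk
      have h1α : (1:ℝ)/α = 1 - γ := by rw [hγ]; ring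
      rw [h1α]
      exact h
    have hratio : (|ai|/M) ^ k ≤ (|ai|/M) ^ 2 :=
      pow_le_pow_of_le_one (by positivity) (by rw [div_le_one hM]; exact haiM) hk
    have hsq : (|ai|/M) ^ 2 = (ai/M)^2 := by
      rw [div_pow, div_pow, sq_abs]
    calc pi * (|ai|/M) ^ k * ((u * (k:ℝ) ^ (1/α)) ^ k / (k ! : ℝ))
        ≤ pi * (|ai|/M) ^ 2 * (Q * (1/2:ℝ)^k) := by
          refine mul_le_mul (mul_le_mul_of_nonneg_left hratio hpi.le) hterm
            (by positivity) (by positivity)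
      _ = pi * (ai/M)^2 * (Q * (1/2:ℝ)^k) := by rw [hsq]
  -- summability of the integral series
  have hgnn : ∀ k : ℕ, 0 ≤ ∫ ω, (b * |Y ω|) ^ k / (k ! : ℝ) ∂μ := fun k =>
    integral_nonneg fun ω => div_nonneg
      (pow_nonneg (mul_nonneg hbnn (abs_nonneg _)) _) (Nat.cast_nonneg _)
  have hgeo : Summable (fun k : ℕ => (1/2:ℝ)^k) :=
    summable_geometric_of_lt_one (by norm_num) (by norm_num)
  have hmaj : Summable (fun k : ℕ => pi * (ai/M)^2 * (Q * (1/2:ℝ)^(k+2))) := by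
    refine Summable.congr (hgeo.mul_left (pi * (ai/M)^2 * Q * (1/4))) ?_
    intro k
    rw [pow_add]
    ring
  have hgsum : Summable (fun k : ℕ => ∫ ω, (b * |Y ω|) ^ k / (k ! : ℝ) ∂μ) := by
    rw [← summable_nat_add_iff 2]
    exact Summable.of_nonneg_of_le (fun k => hgnn (k+2))
      (fun k => hgle (k+2) (by omega)) hmaj
  -- integrability of exp (b |Y|)
  have hexpabs : Integrable (fun ω => Real.exp (b * |Y ω|)) μ :=
    integrable_exp_of_moments μ (fun ω => b * |Y ω|) (measurable_const.mul hYm.abs)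
      (fun ω => mul_nonneg hbnn (abs_nonneg _)) hgint hgsum
  have habseq : ∀ ω, |s * (ai * Y ω)| = b * |Y ω| := fun ω => by
    rw [abs_mul, abs_mul, abs_of_pos hs, hb]; ring
  have hintexp : Integrable (fun ω => Real.exp (s * (ai * Y ω))) μ := by
    refine hexpabs.mono' ?_ ?_
    · exact (Real.measurable_exp.comp
        ((measurable_const.mul hYm).const_mul s)).aestronglyMeasurable
    · filter_upwards with ω
      rw [Real.norm_eq_abs, abs_of_pos (Real.exp_pos _), Real.exp_le_exp]
      calc s * (ai * Y ω) ≤ |s * (ai * Y ω)| := le_abs_self _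
        _ = b * |Y ω| := habseq ω
  refine ⟨hintexp, ?_⟩
  -- ψ and its integral
  set ψ : Ω → ℝ := fun ω => Real.exp (b * |Y ω|) - 1 - b * |Y ω| with hψ
  have hψint : Integrable ψ μ :=
    (hexpabs.sub (integrable_const 1)).sub (habs.const_mul b)
  have hnrm : (fun k : ℕ => ∫ ω, ‖(b * |Y ω|) ^ (k+2) / ((k+2)! : ℝ)‖ ∂μ)
      = fun k : ℕ => ∫ ω, (b * |Y ω|) ^ (k+2) / ((k+2)! : ℝ) ∂μ := by
    funext k
    refine integral_congr_ae ?_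
    filter_upwards with ω
    rw [Real.norm_eq_abs, abs_of_nonneg (div_nonneg
      (pow_nonneg (mul_nonneg hbnn (abs_nonneg _)) _) (Nat.cast_nonneg _))]
  have hψeq : ∫ ω, ψ ω ∂μ = ∑' k : ℕ, ∫ ω, (b * |Y ω|) ^ (k+2) / ((k+2)! : ℝ) ∂μ := by
    have hpt : ∀ ω, ψ ω = ∑' k : ℕ, (b * |Y ω|) ^ (k+2) / ((k+2)! : ℝ) := by
      intro ω
      have h := exp_series_shift (b * |Y ω|)
      rw [hψ]
      simp only
      linarith
    calc ∫ ω, ψ ω ∂μ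
        = ∫ ω, ∑' k : ℕ, (b * |Y ω|) ^ (k+2) / ((k+2)! : ℝ) ∂μ :=
          integral_congr_ae (by filter_upwards with ω; exact hpt ω)
      _ = ∑' k : ℕ, ∫ ω, (b * |Y ω|) ^ (k+2) / ((k+2)! : ℝ) ∂μ := by
          refine (integral_tsum_of_summable_integral_norm (fun k => hgint (k+2)) ?_).symm
          rw [hnrm]
          exact (summable_nat_add_iff 2).2 hgsum
  have hψle : ∫ ω, ψ ω ∂μ ≤ pi * (ai/M)^2 * Q := by
    rw [hψeq]
    have hQnn : 0 ≤ pi * (ai/M)^2 * Q := by positivity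
    calc ∑' k : ℕ, ∫ ω, (b * |Y ω|) ^ (k+2) / ((k+2)! : ℝ) ∂μ
        ≤ ∑' k : ℕ, pi * (ai/M)^2 * (Q * (1/2:ℝ)^(k+2)) :=
          Summable.tsum_le_tsum (fun k => hgle (k+2) (by omega))
            ((summable_nat_add_iff 2).2 hgsum) hmaj
      _ = (pi * (ai/M)^2 * Q * (1/4)) * ∑' k : ℕ, (1/2:ℝ)^k := by
          rw [← tsum_mul_left]
          refine tsum_congr fun k => ?_
          rw [pow_add]
          ring
      _ = (pi * (ai/M)^2 * Q * (1/4)) * 2 := by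
          rw [tsum_geometric_of_lt_one (by norm_num) (by norm_num)]
          norm_num
      _ ≤ pi * (ai/M)^2 * Q := by
          have hQnn' : 0 ≤ pi * (ai/M)^2 * Q :=
            mul_nonneg (mul_nonneg hpi.le (sq_nonneg _)) hQpos.le
          linarith
  -- assemble the mgf bound
  have hrhs_int : Integrable (fun ω => 1 + s * (ai * Y ω) + ψ ω) μ :=
    ((integrable_const 1).add ((hYint.const_mul ai).const_mul s)).add hψint
  have hmono : ∫ ω, Real.exp (s * (ai * Y ω)) ∂μ ≤ ∫ ω, (1 + s * (ai * Y ω) + ψ ω) ∂μ := by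
    refine integral_mono hintexp hrhs_int ?_
    intro ω
    have h := exp_le_linear_add (s * (ai * Y ω))
    rw [habseq ω] at h
    exact h
  have hrhs_val : ∫ ω, (1 + s * (ai * Y ω) + ψ ω) ∂μ = 1 + ∫ ω, ψ ω ∂μ := by
    have hf : Integrable (fun ω => 1 + s * (ai * Y ω)) μ :=
      integrable_const_add_iff.2 ((hYint.const_mul ai).const_mul s)
    rw [integral_add hf hψint,
      integral_add (integrable_const 1) ((hYint.const_mul ai).const_mul s)]
    simp [integral_const_mul, hcen]
  have : mgf (fun ω => ai * Y ω) μ s = ∫ ω, Real.exp (s * (ai * Y ω)) ∂μ := rfl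
  rw [this]
  calc ∫ ω, Real.exp (s * (ai * Y ω)) ∂μ
      ≤ ∫ ω, (1 + s * (ai * Y ω) + ψ ω) ∂μ := hmono
    _ = 1 + ∫ ω, ψ ω ∂μ := hrhs_val
    _ ≤ 1 + pi * (ai/M)^2 * Q := by linarith

set_option maxHeartbeats 1000000 in
lemma oneside (α γ C₁ : ℝ) (hα : 1 < α) (hγ : γ = 1 - 1/α)
    (hC₁pos : 0 < C₁)
    (hC₁a : γ * Real.exp ((1-γ)/γ) * C₁ ^ (1/γ) ≤ 1/8)
    (hC₁b : C₁ ≤ (16 * Real.exp 1)⁻¹)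
    (n : ℕ) (Ω : Type) [MeasurableSpace Ω] (μ : Measure Ω) [IsProbabilityMeasure μ]
    (X : Fin n → Ω → ℝ) (p : Fin n → ℝ) (K : ℝ) (hK : 0 < K)
    (hp : ∀ i, 0 < p i ∧ p i ≤ 1)
    (hXm : ∀ i, Measurable (X i))
    (hind : iIndepFun X μ)
    (hcen : ∀ i, ∫ ω, X i ω ∂μ = 0)
    (hmom : ∀ i, ∀ r : ℝ, 1 ≤ r →
      Integrable (fun ω => |X i ω| ^ r) μ ∧
      ∫ ω, |X i ω| ^ r ∂μ ≤ p i * (K * r ^ (1 / α)) ^ r)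
    (a : Fin n → ℝ) (M Λ : ℝ) (hM : 0 < M) (hMa : ∀ i, |a i| ≤ M)
    (hΛ : ∑ i, (a i)^2 * p i = Λ) (hΛpos : 0 < Λ)
    (t : ℝ) (ht : 0 < t)
    (hreg : Real.exp 1 * (16 / C₁) * K * Λ ≤ t * M) :
    (μ {ω | t ≤ ∑ i, a i * X i ω}).toReal ≤
      Real.exp (-(C₁/2 * (t/(K*M)) * Real.log (t * M / (16 / C₁ * K * Λ)) ^ γ)) := by
  have hγ0 : 0 < γ := by
    rw [hγ]; have : 1/α < 1 := by rw [div_lt_one (by linarith)]; linarith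
    linarith
  have hγ1 : γ < 1 := by
    rw [hγ]; have : 0 < 1/α := by positivity
    linarith
  set c : ℝ := 16 / C₁ with hc
  have hcpos : 0 < c := by positivity
  set R : ℝ := t * M / (c * K * Λ) with hR
  have hcKΛ : 0 < c * K * Λ := by positivity
  have hRe : Real.exp 1 ≤ R := by
    rw [hR, le_div_iff₀ hcKΛ]
    linarith [hreg]
  have hRpos : 0 < R := lt_of_lt_of_le (Real.exp_pos 1) hRe
  set L : ℝ := Real.log R with hL
  have hL1 : 1 ≤ L := by
    rw [hL]
    calc (1:ℝ) = Real.log (Real.exp 1) := (Real.log_exp 1).symm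
      _ ≤ Real.log R := Real.log_le_log (Real.exp_pos 1) hRe
  have hLpos : 0 < L := lt_of_lt_of_le one_pos hL1
  have hexpL : Real.exp L = R := Real.exp_log hRpos
  set Lγ : ℝ := L ^ γ with hLγ
  have hLγ1 : 1 ≤ Lγ := by
    rw [hLγ]
    calc (1:ℝ) = 1 ^ γ := (Real.one_rpow γ).symm
      _ ≤ L ^ γ := Real.rpow_le_rpow zero_le_one hL1 hγ0.le
  have hLγpos : 0 < Lγ := lt_of_lt_of_le one_pos hLγ1
  set s : ℝ := C₁ * Lγ / (K * M) with hs
  have hspos : 0 < s := by positivity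
  set u : ℝ := C₁ * Lγ with hu
  have hupos : 0 < u := by positivity
  have hsKM : s * (K * M) = u := by
    rw [hs, hu]; field_simp
  -- apply per_coord to every coordinate
  set Q : ℝ := Real.exp ((γ * Real.exp ((1-γ)/γ)) * u ^ (1/γ))
      * 2 ^ (⌈(2*Real.exp 1*u)^(1/γ)⌉₊ + 2) with hQ
  have hQpos : 0 < Q := by positivity
  have hpc : ∀ i, Integrable (fun ω => Real.exp (s * (a i * X i ω))) μ ∧
      mgf (fun ω => a i * X i ω) μ s ≤ 1 + p i * (a i / M)^2 * Q :=
    fun i => per_coord μ α γ hα hγ (X i) (hXm i) (hcen i) (p i) K (hp i).1 hK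
      (hmom i) (a i) M s u hM (hMa i) hspos hsKM
  -- independence of the scaled family
  set f : Fin n → Ω → ℝ := fun i ω => a i * X i ω with hf
  have hfm : ∀ i, Measurable (f i) := fun i => (hXm i).const_mul (a i)
  have hindf : iIndepFun f μ := by
    have := hind.comp (fun i (x : ℝ) => a i * x) (fun i => measurable_const_mul (a i))
    exact this
  have hintW : Integrable (fun ω => Real.exp (s * (∑ i, f i) ω)) μ :=
    iIndepFun.integrable_exp_mul_sum hindf hfm (fun i _ => (hpc i).1)
  -- Chernoff
  have hcher := measure_ge_le_exp_mul_mgf (X := ∑ i, f i) (μ := μ) (t := s) t hspos.le hintW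
  have hsetEq : {ω | t ≤ ∑ i, a i * X i ω} = {ω | t ≤ (∑ i, f i) ω} := by
    ext ω
    simp [hf, Finset.sum_apply]
  rw [hsetEq]
  refine hcher.trans ?_
  -- bound the mgf product
  have hmgfW : mgf (∑ i, f i) μ s = ∏ i, mgf (f i) μ s := hindf.mgf_sum hfm univ
  have hprod : ∏ i, mgf (f i) μ s ≤ Real.exp (Λ * Q / M^2) := by
    calc ∏ i, mgf (f i) μ s
        ≤ ∏ i, Real.exp (p i * (a i / M)^2 * Q) := by
          refine Finset.prod_le_prod (fun i _ => mgf_nonneg) (fun i _ => ?_)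
          refine ((hpc i).2).trans ?_
          have := Real.add_one_le_exp (p i * (a i / M)^2 * Q)
          linarith
      _ = Real.exp (∑ i, p i * (a i / M)^2 * Q) := by rw [Real.exp_sum]
      _ = Real.exp (Λ * Q / M^2) := by
          congr 1
          calc ∑ i, p i * (a i / M)^2 * Q
              = ∑ i, (a i)^2 * p i * (Q / M^2) :=
                Finset.sum_congr rfl (fun i _ => by rw [div_pow]; ring)
            _ = Λ * (Q / M^2) := by rw [← Finset.sum_mul, hΛ]
            _ = Λ * Q / M^2 := by ring
  -- final numeric estimate
  have hu1γ : u ^ (1/γ) = C₁ ^ (1/γ) * L := by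
    rw [hu, hLγ, Real.mul_rpow hC₁pos.le (Real.rpow_nonneg hLpos.le _),
      ← Real.rpow_mul hLpos.le, mul_one_div, div_self hγ0.ne', Real.rpow_one]
  have h2eu : (2*Real.exp 1*u) ^ (1/γ) = (2*Real.exp 1*C₁) ^ (1/γ) * L := by
    have hh : 2*Real.exp 1*u = (2*Real.exp 1*C₁) * L ^ γ := by rw [hu, hLγ]; ring
    rw [hh, Real.mul_rpow (by positivity) (Real.rpow_nonneg hLpos.le _),
      ← Real.rpow_mul hLpos.le, mul_one_div, div_self hγ0.ne', Real.rpow_one]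
  have hBCle : γ * Real.exp ((1-γ)/γ) * u ^ (1/γ) ≤ L/8 := by
    rw [hu1γ, ← mul_assoc]
    calc γ * Real.exp ((1-γ)/γ) * C₁ ^ (1/γ) * L ≤ 1/8 * L :=
          mul_le_mul_of_nonneg_right hC₁a hLpos.le
      _ = L/8 := by ring
  have h2eC : (2*Real.exp 1*C₁) ^ (1/γ) ≤ 1/8 := by
    have hbase : 2*Real.exp 1*C₁ ≤ 1/8 := by
      have h1 : 2*Real.exp 1*C₁ ≤ 2*Real.exp 1 * (16*Real.exp 1)⁻¹ :=
        mul_le_mul_of_nonneg_left hC₁b (by positivity)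
      have h2 : 2*Real.exp 1 * (16*Real.exp 1)⁻¹ = 1/8 := by
        field_simp
        ring
      linarith
    have hbase0 : 0 < 2*Real.exp 1*C₁ := by positivity
    have h1γ : (1:ℝ) ≤ 1/γ := by
      rw [le_div_iff₀ hγ0]; linarith
    calc (2*Real.exp 1*C₁) ^ (1/γ) ≤ (2*Real.exp 1*C₁) ^ (1:ℝ) :=
          Real.rpow_le_rpow_of_exponent_ge hbase0
            (hbase.trans (by norm_num)) h1γ
      _ = 2*Real.exp 1*C₁ := Real.rpow_one _
      _ ≤ 1/8 := hbase
  set N := ⌈(2*Real.exp 1*u)^(1/γ)⌉₊ with hN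
  have hNle : ((N:ℝ) + 2) ≤ 1/8*L + 3 := by
    have h1 : (N:ℝ) < (2*Real.exp 1*u)^(1/γ) + 1 := Nat.ceil_lt_add_one (by positivity)
    rw [h2eu] at h1
    have h2 : (2*Real.exp 1*C₁) ^ (1/γ) * L ≤ 1/8 * L :=
      mul_le_mul_of_nonneg_right h2eC hLpos.le
    linarith
  have h2pow : (2:ℝ) ^ (N+2) = Real.exp (((N:ℝ)+2) * Real.log 2) := by
    rw [show ((N:ℝ)+2) * Real.log 2 = Real.log ((2:ℝ) ^ (N+2)) by
      rw [Real.log_pow]; push_cast; ring]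
    rw [Real.exp_log (by positivity)]
  have hlog2 : (0:ℝ) ≤ Real.log 2 ∧ Real.log 2 ≤ 1 := by
    constructor
    · exact Real.log_nonneg one_le_two
    · have := Real.log_le_sub_one_of_pos (show (0:ℝ) < 2 by norm_num)
      linarith
  have hQle : Q ≤ Real.exp (L/4 + 3 * Real.log 2) := by
    rw [hQ, h2pow, ← Real.exp_add, Real.exp_le_exp]
    have h3 : ((N:ℝ)+2) * Real.log 2 ≤ (1/8*L + 3) * Real.log 2 :=
      mul_le_mul_of_nonneg_right hNle hlog2.1
    have h4 : L * Real.log 2 ≤ L := mul_le_of_le_one_right hLpos.le hlog2.2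
    linarith [h3, hBCle, h4]
  have hQR : Q ≤ 8 * R := by
    refine hQle.trans ?_
    rw [← hexpL, Real.exp_add]
    have h8 : Real.exp (3 * Real.log 2) = 8 := by
      rw [show (3:ℝ) * Real.log 2 = Real.log ((2:ℝ)^(3:ℕ)) by
        rw [Real.log_pow]; push_cast; ring]
      rw [Real.exp_log (by norm_num)]
      norm_num
    rw [h8]
    have hmono : Real.exp (L/4) ≤ Real.exp L := Real.exp_le_exp.2 (by linarith)
    linarith
  have hΛeq : Λ * (c*K*R) = t*M := by
    rw [hR]
    field_simp
  have hΛv : Λ = t*M/(c*K*R) := by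
    rw [eq_div_iff (by positivity : c*K*R ≠ 0)]
    linarith [hΛeq]
  have hΛQ : Λ * Q / M^2 ≤ C₁/2 * (t/(K*M)) * Lγ := by
    rw [hΛv]
    have key : t*M/(c*K*R)*Q/M^2 = (t/(K*M)) * (Q/(c*R)) := by
      field_simp
    rw [key]
    have h1 : Q/(c*R) ≤ C₁/2 := by
      rw [div_le_iff₀ (by positivity)]
      calc Q ≤ 8*R := hQR
        _ = C₁/2 * (16/C₁*R) := by field_simp; ring
        _ = C₁/2 * (c*R) := by rw [hc]
    calc (t/(K*M)) * (Q/(c*R)) ≤ (t/(K*M)) * (C₁/2) :=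
          mul_le_mul_of_nonneg_left h1 (by positivity)
      _ = C₁/2 * (t/(K*M)) * 1 := by ring
      _ ≤ C₁/2 * (t/(K*M)) * Lγ := by
          refine mul_le_mul_of_nonneg_left hLγ1 (by positivity)
  have hst : s * t = C₁ * (t/(K*M)) * Lγ := by
    rw [hs, hu]
    field_simp
  have hfinal : Real.exp (-s * t) * Real.exp (Λ * Q / M^2)
      ≤ Real.exp (-(C₁/2 * (t/(K*M)) * Lγ)) := by
    rw [← Real.exp_add, Real.exp_le_exp]
    have hv : 0 ≤ t/(K*M) := by positivity
    linarith [hst, hΛQ]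
  calc Real.exp (-s * t) * mgf (∑ i, f i) μ s
      ≤ Real.exp (-s * t) * Real.exp (Λ * Q / M^2) := by
        rw [hmgfW] at *
        exact mul_le_mul_of_nonneg_left hprod (Real.exp_pos _).le
    _ ≤ Real.exp (-(C₁/2 * (t/(K*M)) * Lγ)) := hfinal

/-- **Bennett-type tail bound for the linear form, simplified version**
(Theorem 1.4, linear part): for `α > 1`, in the large-deviation regime
`t ‖a‖_∞ ≥ e c_α K λ²` the tail gains an extra factor `(log (t‖a‖_∞/(c_α K λ²)))^{1-1/α}`. -/
theorem sparse_bennett_linear_simple (α : ℝ) (hα : 1 < α) :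
    ∃ C c : ℝ, 0 < C ∧ 0 < c ∧
      ∀ (n : ℕ), 1 ≤ n →
      ∀ (Ω : Type) [MeasurableSpace Ω] (μ : Measure Ω) [IsProbabilityMeasure μ]
        (X : Fin n → Ω → ℝ) (p : Fin n → ℝ) (K : ℝ),
        0 < K →
        (∀ i, 0 < p i ∧ p i ≤ 1) →
        (∀ i, Measurable (X i)) →
        iIndepFun X μ →
        (∀ i, ∫ ω, X i ω ∂μ = 0) →
        (∀ i, ∀ r : ℝ, 1 ≤ r →
          Integrable (fun ω => |X i ω| ^ r) μ ∧
          ∫ ω, |X i ω| ^ r ∂μ ≤ p i * (K * r ^ (1 / α)) ^ r) →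
        ∀ (a : Fin n → ℝ), a ≠ 0 →
        ∀ t : ℝ, 0 < t →
          Real.exp 1 * c * K * (∑ i, (a i) ^ 2 * p i) ≤ t * (⨆ i, |a i|) →
          (μ {ω | t < |∑ i, a i * X i ω|}).toReal ≤
            Real.exp 2 * Real.exp (-(C * (t / (K * (⨆ i, |a i|))) *
              Real.log (t * (⨆ i, |a i|) / (c * K * ∑ i, (a i) ^ 2 * p i)) ^ (1 - 1 / α))) := by
  have hγ0 : 0 < 1 - 1/α := by
    have : 1/α < 1 := by rw [div_lt_one (by linarith)]; linarith
    linarith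
  set γ : ℝ := 1 - 1/α with hγdef
  set B : ℝ := γ * Real.exp ((1-γ)/γ) with hB
  have hBpos : 0 < B := by positivity
  set C₁ : ℝ := min (((8*B)⁻¹) ^ γ) ((16*Real.exp 1)⁻¹) with hC₁def
  have hC₁pos : 0 < C₁ :=
    lt_min (Real.rpow_pos_of_pos (by positivity) _) (by positivity)
  have hC₁b : C₁ ≤ (16 * Real.exp 1)⁻¹ := min_le_right _ _
  have hC₁a : B * C₁ ^ (1/γ) ≤ 1/8 := by
    have h1 : C₁ ≤ ((8*B)⁻¹) ^ γ := min_le_left _ _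
    have h2 : C₁ ^ (1/γ) ≤ (((8*B)⁻¹) ^ γ) ^ (1/γ) :=
      Real.rpow_le_rpow hC₁pos.le h1 (by positivity)
    have h3 : (((8*B)⁻¹) ^ γ) ^ (1/γ) = (8*B)⁻¹ := by
      rw [← Real.rpow_mul (by positivity), mul_one_div, div_self hγ0.ne', Real.rpow_one]
    have h4 : C₁ ^ (1/γ) ≤ (8*B)⁻¹ := h2.trans_eq h3
    have h5 : B * C₁ ^ (1/γ) ≤ B * (8*B)⁻¹ := mul_le_mul_of_nonneg_left h4 hBpos.le
    have h6 : B * (8*B)⁻¹ = 1/8 := by field_simp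
    linarith
  refine ⟨C₁/2, 16/C₁, by positivity, by positivity, ?_⟩
  intro n hn Ω _ μ _ X p K hK hp hXm hind hcen hmom a ha t ht hreg
  have : Nonempty (Fin n) := ⟨⟨0, hn⟩⟩
  set M : ℝ := ⨆ i, |a i| with hM
  have hbdd : BddAbove (Set.range fun i => |a i|) :=
    Set.Finite.bddAbove (Set.finite_range _)
  have hMa : ∀ i, |a i| ≤ M := fun i => le_ciSup hbdd i
  obtain ⟨j, hj⟩ : ∃ j, a j ≠ 0 := Function.ne_iff.1 ha
  have hMpos : 0 < M := lt_of_lt_of_le (abs_pos.2 hj) (hMa j)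
  set Λ : ℝ := ∑ i, (a i)^2 * p i with hΛdef
  have hΛpos : 0 < Λ := by
    rw [hΛdef]
    refine Finset.sum_pos' (fun i _ => mul_nonneg (sq_nonneg _) (hp i).1.le)
      ⟨j, Finset.mem_univ j, ?_⟩
    have h1 : 0 < |a j| := abs_pos.2 hj
    have h2 : (0:ℝ) < (a j)^2 := by rw [← sq_abs]; positivity
    exact mul_pos h2 (hp j).1
  -- the two one-sided bounds
  have hone := oneside α γ C₁ hα hγdef hC₁pos hC₁a hC₁b n Ω μ X p K hK hp hXm hind
    hcen hmom a M Λ hMpos hMa hΛdef.symm hΛpos t ht hreg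
  have hΛ' : ∑ i, (-a i)^2 * p i = Λ := by
    rw [hΛdef]
    exact Finset.sum_congr rfl fun i _ => by rw [neg_sq]
  have htwo := oneside α γ C₁ hα hγdef hC₁pos hC₁a hC₁b n Ω μ X p K hK hp hXm hind
    hcen hmom (fun i => -a i) M Λ hMpos (fun i => by rw [abs_neg]; exact hMa i)
    hΛ' hΛpos t ht hreg
  -- union bound
  set E : ℝ := C₁/2 * (t/(K*M)) * Real.log (t * M / (16 / C₁ * K * Λ)) ^ γ with hE
  have hsub : {ω | t < |∑ i, a i * X i ω|} ⊆
      {ω | t ≤ ∑ i, a i * X i ω} ∪ {ω | t ≤ ∑ i, -a i * X i ω} := by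
    intro ω hω
    simp only [Set.mem_setOf_eq, Set.mem_union] at *
    have hneg : ∑ i, -a i * X i ω = -∑ i, a i * X i ω := by
      rw [← Finset.sum_neg_distrib]
      exact Finset.sum_congr rfl fun i _ => by ring
    rcases abs_cases (∑ i, a i * X i ω) with ⟨heq, _⟩ | ⟨heq, _⟩
    · left; rw [heq] at hω; linarith
    · right; rw [heq] at hω; rw [hneg]; linarith
  have hmeas : (μ {ω | t < |∑ i, a i * X i ω|}).toReal ≤
      (μ {ω | t ≤ ∑ i, a i * X i ω}).toReal + (μ {ω | t ≤ ∑ i, -a i * X i ω}).toReal := by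
    have h1 : μ {ω | t < |∑ i, a i * X i ω|} ≤
        μ {ω | t ≤ ∑ i, a i * X i ω} + μ {ω | t ≤ ∑ i, -a i * X i ω} :=
      (measure_mono hsub).trans (measure_union_le _ _)
    rw [← ENNReal.toReal_add (measure_ne_top μ _) (measure_ne_top μ _)]
    exact ENNReal.toReal_mono
      (ENNReal.add_ne_top.2 ⟨measure_ne_top μ _, measure_ne_top μ _⟩) h1
  have htwo' : (μ {ω | t ≤ ∑ i, -a i * X i ω}).toReal ≤ Real.exp (-E) := htwo
  have hone' : (μ {ω | t ≤ ∑ i, a i * X i ω}).toReal ≤ Real.exp (-E) := hone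
  have h2exp : (2:ℝ) ≤ Real.exp 2 := by
    have := Real.add_one_le_exp (2:ℝ)
    linarith
  calc (μ {ω | t < |∑ i, a i * X i ω|}).toReal
      ≤ Real.exp (-E) + Real.exp (-E) := by linarith [hmeas, hone', htwo']
    _ = 2 * Real.exp (-E) := by ring
    _ ≤ Real.exp 2 * Real.exp (-E) :=
        mul_le_mul_of_nonneg_right h2exp (Real.exp_pos _).le
end

section
/- Fix a real number α ∈ (1,∞) and set β := 1 − 1/α. There exist constants C_α > 0 and c_α > 0 depending only on α such that the following holds for every n ≥ 1. Let X = (X_1,…,X_n) be a random vector with independent centered sparse α-subexponential components with sparsity parameters p_1,…,p_n ∈ (0,1] and constant K > 0, let a ∈ ℝⁿ, and let λ > 0, M > 0 satisfy Σ_{i=1}^n a_i² p_i ≤ λ² and ‖a‖_∞ ≤ M. For T := t M / (c_α K λ²) define H_α(T) := [ −β · W_{−1}( −(1/β) T^{−1/β} ) ]^β if T > (e/β)^β, and H_α(T) := 0 otherwise (note that T > (e/β)^β implies −(1/β) T^{−1/β} ∈ (−e^{−1}, 0), so W_{−1} is well-defined). Then for every t > 0, P( |Σ_{i=1}^n a_i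 X_i| > t ) ≤ e² · exp( − C_α · min{ t² / (K² λ²), ( t / (K M) ) · max{ 1, H_α(T) } } ). -/
open MeasureTheory ProbabilityTheory Finset Real

/-- The lower branch `W_{-1}` of the Lambert W function: for `x ∈ (-e⁻¹, 0)` the
equation `y e^y = x` has exactly two real solutions, and `W_{-1}(x)` is the smaller one,
so it equals the infimum of the (two-element) solution set. -/
noncomputable def lambertWm1 (x : ℝ) : ℝ :=
  sInf {y : ℝ | y * Real.exp y = x}

/-- The function `H_α(T) = [-β W_{-1}(-(1/β) T^{-1/β})]^β` for `T > (e/β)^β`, `0` otherwise,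
where `β = 1 - 1/α`. -/
noncomputable def Hfun (β T : ℝ) : ℝ :=
  if (Real.exp 1 / β) ^ β < T then
    (-β * lambertWm1 (-(1 / β) * T ^ (-(1 / β)))) ^ β
  else 0

section Aux


-- pointwise quadratic bound on exp
lemma exp_le_quad (x : ℝ) : Real.exp x ≤ 1 + x + x^2 * Real.exp |x| := by
  rcases le_or_gt 0 x with hx | hx
  · rw [abs_of_nonneg hx]
    rcases le_or_gt 1 x with h1 | h1
    · nlinarith [mul_nonneg (Real.exp_pos x).le (by nlinarith : (0:ℝ) ≤ x^2 - 1)]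
    · -- 0 ≤ x < 1 : exp x ≤ 1/(1-x),  (1-x²)exp x ≤ 1+x
      have h2 : 1 - x ≤ Real.exp (-x) := by linarith [Real.add_one_le_exp (-x)]
      have h3 : (1-x) * Real.exp x ≤ 1 := by
        calc (1-x) * Real.exp x ≤ Real.exp (-x) * Real.exp x := by
              apply mul_le_mul_of_nonneg_right h2 (Real.exp_pos x).le
          _ = 1 := by rw [← Real.exp_add]; simp
      nlinarith [Real.exp_pos x]
  · rw [abs_of_neg hx]
    -- suffices exp x ≤ 1 + x + x^2 since exp|x| ≥ 1
    have h1 : Real.exp x ≤ 1 + x + x^2 := by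
      set y := -x with hy
      have hy0 : 0 < y := by simp [hy]; linarith
      rcases le_or_gt 1 y with h | h
      · have : Real.exp x ≤ 1 := by
          apply Real.exp_le_one_iff.mpr; linarith
        nlinarith
      · have h2 : (1+y) * Real.exp (-y) ≤ 1 := by
          calc (1+y) * Real.exp (-y) ≤ Real.exp y * Real.exp (-y) := by
                apply mul_le_mul_of_nonneg_right _ (Real.exp_pos _).le
                linarith [Real.add_one_le_exp y]
            _ = 1 := by rw [← Real.exp_add]; simp
        have hx' : Real.exp x = Real.exp (-y) := by rw [hy]; ring_nf
        have h1y : 0 < 1 + y := by linarith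
        -- need exp(-y) ≤ 1 - y + y²;  1/(1+y) ≤ 1-y+y²  ⟺ 1 ≤ 1+y³
        have : Real.exp (-y) ≤ 1 - y + y^2 := by
          nlinarith [Real.exp_pos (-y)]
        rw [hx']; nlinarith
    have : (1:ℝ) ≤ Real.exp (-x) := by
      rw [Real.one_le_exp_iff]; linarith
    nlinarith [sq_nonneg x]

-- key: for q ≥ 1, m ≥ 1:  q^m ≤ m^(βm) * exp((β/e) q^(1/β)), stated multiplicatively
lemma key_log_ineq (β : ℝ) (hβ0 : 0 < β) (q ρ : ℝ) (hq : 1 ≤ q) (hρ : 1 ≤ ρ) :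
    ρ * Real.log q - β * ρ * Real.log ρ ≤ β * (Real.exp 1)⁻¹ * q ^ (1/β) := by
  have hρ0 : 0 < ρ := by linarith
  have hqpow : (0:ℝ) < q ^ (1/β) := Real.rpow_pos_of_pos (by linarith) _
  have hx : (0:ℝ) < q ^ (1/β) / (Real.exp 1 * ρ) := by positivity
  have h := Real.log_le_sub_one_of_pos hx
  rw [Real.log_div (ne_of_gt hqpow) (by positivity), Real.log_mul (Real.exp_ne_zero 1) (ne_of_gt hρ0),
    Real.log_exp, Real.log_rpow (by linarith)] at h
  -- h : 1/β * log q - (1 + log ρ) ≤ q^(1/β)/(e*ρ) - 1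
  have h2 : 1/β * Real.log q - Real.log ρ ≤ q ^ (1/β) / (Real.exp 1 * ρ) := by linarith
  have h3 := mul_le_mul_of_nonneg_left h2 (by positivity : (0:ℝ) ≤ β * ρ)
  calc ρ * Real.log q - β * ρ * Real.log ρ = β * ρ * (1/β * Real.log q - Real.log ρ) := by
        field_simp
    _ ≤ β * ρ * (q ^ (1/β) / (Real.exp 1 * ρ)) := h3
    _ = β * (Real.exp 1)⁻¹ * q ^ (1/β) := by field_simp

lemma lin_le_two_pow (k : ℕ) : (2:ℝ) * k + 1 ≤ 2 * 2^k := by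
  induction k with
  | zero => norm_num
  | succ n ih =>
    have : (1:ℝ) ≤ 2^n := one_le_pow₀ (by norm_num)
    push_cast
    push_cast at ih
    rw [pow_succ (2:ℝ) n]
    nlinarith

lemma sq_le_two_mul_two_pow (m : ℕ) : (m:ℝ)^2 ≤ 2 * 2^m := by
  induction m with
  | zero => norm_num
  | succ n ih =>
    have h := lin_le_two_pow n
    push_cast
    push_cast at ih
    rw [pow_succ (2:ℝ) n]
    nlinarith

lemma pow_self_le_exp_mul_factorial (m : ℕ) : (m:ℝ)^m ≤ Real.exp m * m.factorial := by
  have h := Real.sum_le_exp_of_nonneg (by positivity : (0:ℝ) ≤ (m:ℝ)) (m+1)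
  have hterm := Finset.single_le_sum (f := fun i : ℕ => (m:ℝ)^i / (i.factorial:ℝ))
    (fun i _ => by positivity) (Finset.self_mem_range_succ m)
  have hfac : (0:ℝ) < m.factorial := by exact_mod_cast m.factorial_pos
  have h2 := hterm.trans h
  rw [div_le_iff₀ hfac] at h2
  linarith

lemma coeff_bound (β : ℝ) (hβ0 : 0 < β) (hβ1 : β ≤ 1) (u : ℝ) (hu : 0 ≤ u) (r : ℕ) :
    u ^ r * ((r:ℝ)+2) ^ ((1-β) * ((r:ℝ)+2)) / (r.factorial : ℝ) ≤
      (1/2) * (1/2:ℝ) ^ r * Real.exp ((4*Real.exp 1) ^ (1/β) * (1+u) ^ (1/β)) := by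
  have he1 : (1:ℝ) ≤ Real.exp 1 := by linarith [Real.add_one_le_exp 1]
  set m : ℕ := r + 2 with hm
  have hMcast : ((r:ℝ)+2) = (m:ℝ) := by push_cast [hm]; ring
  set M : ℝ := (m:ℝ) with hMdef
  have hM2 : (2:ℝ) ≤ M := by
    have h : (2:ℕ) ≤ m := by omega
    rw [hMdef]
    exact_mod_cast h
  have hM0 : (0:ℝ) < M := by linarith
  set w : ℝ := 1 + u with hw
  have hw1 : (1:ℝ) ≤ w := by simp [hw]; linarith
  have hw0 : (0:ℝ) < w := by linarith
  set q : ℝ := 4 * w * Real.exp 1 with hq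
  have hq1 : (1:ℝ) ≤ q := by
    have := Real.exp_pos 1
    nlinarith
  have hq0 : (0:ℝ) < q := by linarith
  set E : ℝ := (4*Real.exp 1) ^ (1/β) * (1+u) ^ (1/β) with hE
  -- step 1 : u^r ≤ w^m
  have h1 : u ^ r ≤ w ^ m := by
    calc u ^ r ≤ w ^ r := by
          apply pow_le_pow_left₀ hu; simp [hw]; 
      _ ≤ w ^ m := pow_le_pow_right₀ hw1 (by omega)
  -- step 2 : (r)! ≥ m! / M^2  i.e. 1/r! ≤ M²/m!
  have hfacpos : (0:ℝ) < (r.factorial : ℝ) := by exact_mod_cast r.factorial_pos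
  have hmfacpos : (0:ℝ) < (m.factorial : ℝ) := by exact_mod_cast m.factorial_pos
  have h2 : (m.factorial : ℝ) ≤ M^2 * r.factorial := by
    have : m.factorial = (r+2) * ((r+1) * r.factorial) := by simp [hm, Nat.factorial_succ]
    rw [this]
    push_cast
    have hr0 : (0:ℝ) ≤ (r:ℝ) := Nat.cast_nonneg r
    have hfr : (0:ℝ) ≤ (r.factorial:ℝ) := hfacpos.le
    have hMr : M = (r:ℝ) + 2 := hMcast.symm
    rw [hMr]
    nlinarith [mul_nonneg hr0 hfr]
  -- step 3 : 1/m! ≤ e^m / M^m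
  have h3 : M ^ m ≤ Real.exp m * m.factorial := pow_self_le_exp_mul_factorial m
  -- Z bound
  have hZ : (q / M ^ β) ^ m ≤ Real.exp ((β * (Real.exp 1)⁻¹) * q ^ (1/β)) := by
    have hMb : (0:ℝ) < M ^ β := Real.rpow_pos_of_pos hM0 _
    have hbase : (0:ℝ) < q / M ^ β := by positivity
    rw [← Real.exp_log (pow_pos hbase m), Real.exp_le_exp]
    rw [Real.log_pow, Real.log_div (ne_of_gt hq0) (ne_of_gt hMb), Real.log_rpow hM0]
    have := key_log_ineq β hβ0 q M hq1 (by linarith)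
    calc (m:ℝ) * (Real.log q - β * Real.log M) = M * Real.log q - β * M * Real.log M := by
          rw [← hMdef]; ring
      _ ≤ β * (Real.exp 1)⁻¹ * q ^ (1/β) := this
      _ = (β * (Real.exp 1)⁻¹) * q ^ (1/β) := by ring
  have hq' : q ^ (1/β) = (4 * Real.exp 1) ^ (1/β) * w ^ (1/β) := by
    rw [hq, show (4:ℝ) * w * Real.exp 1 = (4 * Real.exp 1) * w by ring,
      Real.mul_rpow (by positivity) (by positivity)]
  have hZE : Real.exp ((β * (Real.exp 1)⁻¹) * q ^ (1/β)) ≤ Real.exp E := by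
    rw [Real.exp_le_exp]
    have h4 : (0:ℝ) ≤ (4 * Real.exp 1) ^ (1/β) * w ^ (1/β) := by positivity
    have h5 : β * (Real.exp 1)⁻¹ ≤ 1 := by
      have : (Real.exp 1)⁻¹ ≤ 1 := by
        rw [inv_le_one_iff₀]; right; exact he1
      nlinarith
    have h6 : (0:ℝ) ≤ β * (Real.exp 1)⁻¹ := by positivity
    rw [hq', hE, ← hw]
    nlinarith [mul_nonneg (sub_nonneg.mpr h5) h4]
  -- main chain
  have key : u ^ r * M ^ ((1-β) * M) / (r.factorial:ℝ) ≤ M^2 * (1/4:ℝ)^m * (q / M ^ β) ^ m := by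
    have hMpow : (0:ℝ) < M ^ ((1-β) * M) := Real.rpow_pos_of_pos hM0 _
    -- rewrite RHS
    have hRHS : M^2 * (1/4:ℝ)^m * (q / M ^ β) ^ m
        = M^2 * (w * Real.exp 1)^m / (M ^ β) ^ m := by
      have hstep : (1/4:ℝ) * (q / M ^ β) = (w * Real.exp 1) / (M ^ β) := by
        rw [hq]; ring
      rw [mul_assoc, ← mul_pow, hstep, div_pow, mul_div_assoc]
    rw [hRHS]
    -- (M^β)^m = M^(β*M)
    have hMbm : ((M:ℝ) ^ β) ^ m = M ^ (β * M) := by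
      rw [← Real.rpow_natCast (M ^ β) m, ← Real.rpow_mul hM0.le, ← hMdef]
    rw [hMbm]
    -- now: u^r * M^((1-β)M) / r! ≤ M² (we)^m / M^(βM)
    rw [div_le_div_iff₀ hfacpos (Real.rpow_pos_of_pos hM0 _)]
    have hsplit : M ^ ((1-β) * M) * M ^ (β * M) = M ^ m := by
      rw [← Real.rpow_add hM0, show (1-β)*M + β*M = M by ring, ← Real.rpow_natCast M m]
    have lhs_le : u^r * M ^ ((1-β)*M) * M ^ (β * M) = u^r * M ^ m := by
      rw [mul_assoc, hsplit]
    rw [lhs_le]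
    -- u^r * M^m ≤ M² (we)^m r!
    calc u^r * M ^ m ≤ w^m * (Real.exp m * m.factorial) := by
          apply mul_le_mul h1 h3 (pow_nonneg hM0.le m) (pow_nonneg (by linarith) m)
      _ ≤ w^m * (Real.exp m * (M^2 * r.factorial)) := by
          apply mul_le_mul_of_nonneg_left _ (pow_nonneg hw0.le m)
          apply mul_le_mul_of_nonneg_left h2 (Real.exp_pos _).le
      _ = M^2 * (w * Real.exp 1)^m * r.factorial := by
          rw [mul_pow, ← Real.exp_nat_mul]
          ring_nf
  calc u ^ r * ((r:ℝ)+2) ^ ((1-β) * ((r:ℝ)+2)) / (r.factorial : ℝ)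
      = u ^ r * M ^ ((1-β) * M) / (r.factorial:ℝ) := by rw [hMcast]
    _ ≤ M^2 * (1/4:ℝ)^m * (q / M ^ β) ^ m := key
    _ ≤ M^2 * (1/4:ℝ)^m * Real.exp E := by
        apply mul_le_mul_of_nonneg_left (hZ.trans hZE) (by positivity)
    _ ≤ (1/2) * (1/2:ℝ) ^ r * Real.exp E := by
        apply mul_le_mul_of_nonneg_right _ (Real.exp_pos _).le
        have h6 : M^2 * (1/4:ℝ)^m ≤ 2 * 2^m * (1/4:ℝ)^m := by
          apply mul_le_mul_of_nonneg_right (sq_le_two_mul_two_pow m) (by positivity)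
        have h7 : (2:ℝ) * 2^m * (1/4:ℝ)^m = 2 * (1/2:ℝ)^m := by
          rw [mul_assoc, ← mul_pow]; norm_num
        have h8 : (2:ℝ) * (1/2:ℝ)^m = (1/2) * (1/2:ℝ)^r := by
          rw [hm, pow_add]; norm_num; ring
        rw [h7, h8] at h6; exact h6

lemma two_log_le_self {T : ℝ} (hT : 1 ≤ T) : 2 * Real.log T ≤ T := by
  have hT0 : (0:ℝ) < T := by linarith
  have hs0 : (0:ℝ) ≤ Real.sqrt T := Real.sqrt_nonneg T
  have h1 : Real.log T = 2 * Real.log (Real.sqrt T) := by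
    rw [Real.log_sqrt hT0.le]; ring
  have h2 : Real.log (Real.sqrt T) ≤ Real.sqrt T - 1 :=
    Real.log_le_sub_one_of_pos (Real.sqrt_pos.mpr hT0)
  have h3 : (Real.sqrt T)^2 = T := Real.sq_sqrt hT0.le
  nlinarith [sq_nonneg (Real.sqrt T - 2)]

lemma Hfun_le (β T : ℝ) (hβ0 : 0 < β) (hβ1 : β < 1) (hT1 : 1 < T) :
    Hfun β T ≤ (2 * Real.log T) ^ β := by
  have hT0 : (0:ℝ) < T := by linarith
  have hL0 : 0 < Real.log T := Real.log_pos hT1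
  have hRHS0 : (0:ℝ) ≤ (2 * Real.log T) ^ β := Real.rpow_nonneg (by linarith) β
  rw [Hfun]
  split_ifs with hc
  swap
  · exact hRHS0
  -- hc : (e/β)^β < T
  set L := Real.log T with hLdef
  have hLβ : β < L := by
    have heβ : (0:ℝ) < Real.exp 1 / β := by positivity
    have h1 : Real.log ((Real.exp 1 / β) ^ β) < L := by
      apply Real.log_lt_log (Real.rpow_pos_of_pos heβ β) hc
    rw [Real.log_rpow heβ, Real.log_div (Real.exp_ne_zero 1) (ne_of_gt hβ0),
      Real.log_exp] at h1
    have hlogβ : Real.log β < 0 := Real.log_neg hβ0 hβ1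
    nlinarith
  set xarg : ℝ := -(1 / β) * T ^ (-(1 / β)) with hxarg
  have hxneg : xarg < 0 := by
    rw [hxarg]
    have h2 : (0:ℝ) < (1/β) * T ^ (-(1/β)) := by
      have : (0:ℝ) < T ^ (-(1/β)) := Real.rpow_pos_of_pos hT0 _
      positivity
    linarith
  set y₀ : ℝ := -((2 / β) * L) with hy0def
  have hu₀1 : 1 ≤ (2/β) * L := by
    have h2β : (1:ℝ) < 2/β := by
      rw [lt_div_iff₀ hβ0]; linarith
    have hkey := mul_lt_mul_of_pos_left hLβ (show (0:ℝ) < 2/β by positivity)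
    have h2 : 2/β * β = 2 := by field_simp
    nlinarith
  -- every solution is ≥ y₀ and < 0
  have claim : ∀ y : ℝ, y * Real.exp y = xarg → y₀ ≤ y ∧ y < 0 := by
    intro y hy
    have hyneg : y < 0 := by
      by_contra h
      push_neg at h
      have : 0 ≤ y * Real.exp y := mul_nonneg h (Real.exp_pos y).le
      linarith
    refine ⟨?_, hyneg⟩
    by_contra hlt
    push_neg at hlt   -- y < y₀
    set u : ℝ := -y with hudef
    set u₀ : ℝ := (2/β) * L with hu0def
    have hyy : y₀ = -u₀ := by rw [hy0def, hu0def]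
    have huu : u₀ < u := by
      rw [hudef]
      rw [hyy] at hlt
      linarith
    have hu₀pos : 0 < u₀ := by linarith
    have hupos : 0 < u := by linarith
    -- u e^{-u} < u₀ e^{-u₀}
    have hmono : u * Real.exp (-u) < u₀ * Real.exp (-u₀) := by
      have hratio : Real.log (u / u₀) < u / u₀ - 1 := by
        apply Real.log_lt_sub_one_of_pos (by positivity)
        have : 1 < u / u₀ := (one_lt_div hu₀pos).mpr huu
        linarith
      have hdiv : u / u₀ - 1 ≤ u - u₀ := by
        rw [div_sub_one (ne_of_gt hu₀pos), div_le_iff₀ hu₀pos]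
        nlinarith
      have hlog : Real.log u - Real.log u₀ < u - u₀ := by
        rw [← Real.log_div (ne_of_gt hupos) (ne_of_gt hu₀pos)]
        linarith
      have h1 : Real.log u - u < Real.log u₀ - u₀ := by linarith
      calc u * Real.exp (-u) = Real.exp (Real.log u - u) := by
            rw [Real.exp_sub, Real.exp_log hupos, Real.exp_neg, div_eq_mul_inv]
        _ < Real.exp (Real.log u₀ - u₀) := Real.exp_lt_exp.mpr h1
        _ = u₀ * Real.exp (-u₀) := by
            rw [Real.exp_sub, Real.exp_log hu₀pos, Real.exp_neg, div_eq_mul_inv]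
    -- u₀ e^{-u₀} ≤ -xarg
    have hbound : u₀ * Real.exp (-u₀) ≤ (1/β) * T ^ (-(1/β)) := by
      have hexpu0 : Real.exp (-u₀) = T ^ (-(2/β)) := by
        rw [Real.rpow_def_of_pos hT0, hu0def]
        congr 1
        rw [← hLdef]; ring
      rw [hexpu0, hu0def]
      -- (2/β) L T^{-2/β} ≤ (1/β) T^{-1/β}  ⟺  2L ≤ T^{1/β}
      have h2L : 2 * L ≤ T ^ (1/β) := by
        have hTT : T ≤ T ^ (1/β) := by
          have h1β : (1:ℝ) ≤ 1/β := by
            rw [le_div_iff₀ hβ0]; linarith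
          calc T = T ^ (1:ℝ) := (Real.rpow_one T).symm
            _ ≤ T ^ (1/β) := Real.rpow_le_rpow_of_exponent_le hT1.le h1β
        exact (two_log_le_self hT1.le).trans hTT
      have hpos2 : (0:ℝ) < T ^ (-(2/β)) := Real.rpow_pos_of_pos hT0 _
      have hpos1 : (0:ℝ) < T ^ (-(1/β)) := Real.rpow_pos_of_pos hT0 _
      have hkey : T ^ (-(2/β)) * T ^ (1/β) = T ^ (-(1/β)) := by
        rw [← Real.rpow_add hT0]
        congr 1; ring
      calc (2/β) * L * T ^ (-(2/β)) = (1/β) * (2 * L) * T ^ (-(2/β)) := by ring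
        _ ≤ (1/β) * T ^ (1/β) * T ^ (-(2/β)) := by
            apply mul_le_mul_of_nonneg_right _ hpos2.le
            apply mul_le_mul_of_nonneg_left h2L (by positivity)
        _ = (1/β) * T ^ (-(1/β)) := by rw [mul_assoc, mul_comm (T ^ (1/β)), hkey]
    have hy2 : y * Real.exp y = -(u * Real.exp (-u)) := by
      rw [hudef]; ring_nf
    have : xarg < xarg := by
      calc xarg = y * Real.exp y := hy.symm
        _ = -(u * Real.exp (-u)) := hy2
        _ > -(u₀ * Real.exp (-u₀)) := by linarith
        _ ≥ -((1/β) * T ^ (-(1/β))) := by linarith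
        _ = xarg := by rw [hxarg]; ring
    exact absurd this (lt_irrefl _)
  -- now bound the sInf
  rw [lambertWm1]
  set S : Set ℝ := {y : ℝ | y * Real.exp y = xarg} with hSdef
  rcases Set.eq_empty_or_nonempty S with hS | hS
  · rw [hS, Real.sInf_empty, mul_zero, Real.zero_rpow (ne_of_gt hβ0)]
    exact hRHS0
  · have hbdd : BddBelow S := ⟨y₀, fun y hy => (claim y hy).1⟩
    have hge : y₀ ≤ sInf S := le_csInf hS (fun y hy => (claim y hy).1)
    obtain ⟨y1, hy1⟩ := hS
    have hle0 : sInf S ≤ y1 := csInf_le hbdd hy1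
    have hy1neg : y1 < 0 := (claim y1 hy1).2
    have h0le : 0 ≤ -β * sInf S := by nlinarith
    have hup : -β * sInf S ≤ 2 * L := by
      have : -β * sInf S ≤ -β * y₀ := by nlinarith
      rw [hy0def] at this
      calc -β * sInf S ≤ -β * -((2/β) * L) := this
        _ = 2 * L := by field_simp
    exact Real.rpow_le_rpow h0le hup hβ0.le

lemma exp_eq_tsum_real (y : ℝ) : Real.exp y = ∑' n : ℕ, y ^ n / n.factorial := by
  rw [Real.exp_eq_exp_ℝ, NormedSpace.exp_eq_tsum_div]

lemma mgf_single {Ω : Type} [MeasurableSpace Ω] (μ : Measure Ω) [IsProbabilityMeasure μ]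
    (Y : Ω → ℝ) (hY : Measurable Y) (p K α : ℝ) (hα : 1 < α)
    (hp : 0 ≤ p) (hK : 0 < K)
    (hmom : ∀ r : ℝ, 1 ≤ r → Integrable (fun ω => |Y ω| ^ r) μ ∧
        ∫ ω, |Y ω| ^ r ∂μ ≤ p * (K * r ^ (1/α)) ^ r)
    (hmean : ∫ ω, Y ω ∂μ = 0) (v : ℝ) :
    Integrable (fun ω => Real.exp (v * Y ω)) μ ∧
    ∫ ω, Real.exp (v * Y ω) ∂μ ≤
      Real.exp (p * v^2 * K^2 *
        Real.exp ((4*Real.exp 1) ^ (1/(1 - 1/α)) * (1 + |v| * K) ^ (1/(1 - 1/α)))) := by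
  have hα0 : (0:ℝ) < α := by linarith
  set β : ℝ := 1 - 1/α with hβ
  have hβ0 : 0 < β := by
    rw [hβ]
    have : 1/α < 1 := by rw [div_lt_one hα0]; exact hα
    linarith
  have hβ1 : β ≤ 1 := by
    rw [hβ]
    have : 0 < 1/α := by positivity
    linarith
  have hainv : 1/α = 1 - β := by rw [hβ]; ring
  set u : ℝ := |v| * K with hu
  have hu0 : 0 ≤ u := by positivity
  set NB : ℝ := Real.exp ((4*Real.exp 1) ^ (1/β) * (1 + u) ^ (1/β)) with hNB
  have hNB0 : 0 < NB := Real.exp_pos _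
  -- Step A : nat moments
  have hmomA : ∀ r : ℕ,
      Integrable (fun ω => |Y ω| ^ (r+2 : ℕ)) μ ∧
      ∫ ω, |Y ω| ^ (r+2 : ℕ) ∂μ ≤ p * (K^(r+2:ℕ) * ((r:ℝ)+2) ^ ((1-β) * ((r:ℝ)+2))) := by
    intro r
    have hρ : (1:ℝ) ≤ (r:ℝ) + 2 := by
      have h := Nat.cast_nonneg (α := ℝ) r
      linarith
    obtain ⟨hint, hbound⟩ := hmom ((r:ℝ)+2) hρ
    have hρ0 : (0:ℝ) ≤ (r:ℝ)+2 := by positivity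
    have hcast : ((r:ℝ)+2) = ((r+2 : ℕ) : ℝ) := by push_cast; ring
    have hrw : ∀ x : ℝ, |x| ^ ((r:ℝ)+2) = |x| ^ (r+2 : ℕ) := by
      intro x
      rw [hcast, Real.rpow_natCast]
    constructor
    · refine hint.congr (ae_of_all _ fun ω => ?_)
      exact hrw (Y ω)
    · have h1 : ∫ ω, |Y ω| ^ (r+2:ℕ) ∂μ = ∫ ω, |Y ω| ^ ((r:ℝ)+2) ∂μ := by
        apply integral_congr_ae
        exact ae_of_all _ fun ω => (hrw (Y ω)).symm
      rw [h1]
      refine hbound.trans ?_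
      have h2 : (K * ((r:ℝ)+2) ^ (1/α)) ^ ((r:ℝ)+2)
          = K^(r+2:ℕ) * ((r:ℝ)+2) ^ ((1-β) * ((r:ℝ)+2)) := by
        rw [Real.mul_rpow hK.le (Real.rpow_nonneg hρ0 _)]
        congr 1
        · rw [hcast, Real.rpow_natCast]
        · rw [← Real.rpow_mul hρ0, hainv]
      rw [h2]
  -- F and its integral
  set F : Ω → ℝ := fun ω => (Y ω)^2 * Real.exp (|v| * |Y ω|) with hF
  have hFmeas : Measurable F := by
    apply Measurable.mul
    · exact (hY.pow_const 2)
    · exact ((hY.abs.const_mul |v|).exp)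
  have hFnn : ∀ ω, 0 ≤ F ω := fun ω => by positivity
  -- pointwise series for ofReal ∘ F
  have hptwise : ∀ ω, ENNReal.ofReal (F ω)
      = ∑' r : ℕ, ENNReal.ofReal ((|v|^r / r.factorial) * |Y ω| ^ (r+2:ℕ)) := by
    intro ω
    have hsum : Summable (fun r : ℕ => (|v|^r / r.factorial) * |Y ω| ^ (r+2:ℕ)) := by
      have heq : (fun r : ℕ => (|v|^r / r.factorial) * |Y ω| ^ (r+2:ℕ))
          = fun r : ℕ => (Y ω)^2 * ((|v| * |Y ω|)^r / r.factorial) := by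
        funext r
        rw [mul_pow, pow_add, sq_abs]
        ring
      rw [heq]
      exact (Real.summable_pow_div_factorial (|v| * |Y ω|)).mul_left _
    have hFval : F ω = ∑' r : ℕ, (|v|^r / r.factorial) * |Y ω| ^ (r+2:ℕ) := by
      rw [hF]
      simp only
      rw [exp_eq_tsum_real (|v| * |Y ω|), ← tsum_mul_left]
      congr 1
      funext r
      rw [mul_pow, pow_add, sq_abs]
      ring
    rw [hFval, ENNReal.ofReal_tsum_of_nonneg _ hsum]
    intro r
    positivity
  have hlint : ∫⁻ ω, ENNReal.ofReal (F ω) ∂μ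
      = ∑' r : ℕ, ∫⁻ ω, ENNReal.ofReal ((|v|^r / r.factorial) * |Y ω| ^ (r+2:ℕ)) ∂μ := by
    simp_rw [hptwise]
    apply lintegral_tsum
    intro r
    exact (ENNReal.measurable_ofReal.comp
      (((hY.abs.pow_const (r+2)).const_mul _))).aemeasurable
  have hterm : ∀ r : ℕ, ∫⁻ ω, ENNReal.ofReal ((|v|^r / r.factorial) * |Y ω| ^ (r+2:ℕ)) ∂μ
      ≤ ENNReal.ofReal (p * K^2 * ((1/2) * (1/2:ℝ)^r * NB)) := by
    intro r
    have hc0 : (0:ℝ) ≤ |v|^r / r.factorial := by positivity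
    have hsplit : ∀ ω, ENNReal.ofReal ((|v|^r / r.factorial) * |Y ω| ^ (r+2:ℕ))
        = ENNReal.ofReal (|v|^r / r.factorial) * ENNReal.ofReal (|Y ω| ^ (r+2:ℕ)) := by
      intro ω; rw [ENNReal.ofReal_mul hc0]
    simp_rw [hsplit]
    rw [lintegral_const_mul' _ _ ENNReal.ofReal_ne_top]
    obtain ⟨hint, hbound⟩ := hmomA r
    have hmoml : ∫⁻ ω, ENNReal.ofReal (|Y ω| ^ (r+2:ℕ)) ∂μ
        = ENNReal.ofReal (∫ ω, |Y ω| ^ (r+2:ℕ) ∂μ) := by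
      rw [← ofReal_integral_eq_lintegral_ofReal hint (ae_of_all _ fun ω => by positivity)]
    rw [hmoml, ← ENNReal.ofReal_mul hc0]
    apply ENNReal.ofReal_le_ofReal
    have hchain : |v|^r / r.factorial * ∫ ω, |Y ω| ^ (r+2:ℕ) ∂μ
        ≤ |v|^r / r.factorial * (p * (K^(r+2:ℕ) * ((r:ℝ)+2) ^ ((1-β) * ((r:ℝ)+2)))) := by
      apply mul_le_mul_of_nonneg_left hbound hc0
    refine hchain.trans ?_
    have hid : |v|^r / r.factorial * (p * (K^(r+2:ℕ) * ((r:ℝ)+2) ^ ((1-β) * ((r:ℝ)+2))))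
        = p * K^2 * (u ^ r * ((r:ℝ)+2) ^ ((1-β) * ((r:ℝ)+2)) / (r.factorial : ℝ)) := by
      rw [hu]
      rw [mul_pow, pow_add]
      field_simp
    rw [hid]
    apply mul_le_mul_of_nonneg_left _ (by positivity : (0:ℝ) ≤ p * K^2)
    exact coeff_bound β hβ0 hβ1 u hu0 r
  have hgeom : ∑' r : ℕ, ENNReal.ofReal (p * K^2 * ((1/2) * (1/2:ℝ)^r * NB))
      = ENNReal.ofReal (p * K^2 * NB) := by
    have hsum2 : Summable (fun r : ℕ => p * K^2 * ((1/2) * (1/2:ℝ)^r * NB)) := by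
      apply Summable.mul_left
      apply Summable.mul_right
      exact (summable_geometric_of_lt_one (by norm_num) (by norm_num)).mul_left _
    rw [← ENNReal.ofReal_tsum_of_nonneg (fun r => by positivity) hsum2]
    congr 1
    have : ∑' r : ℕ, p * K^2 * ((1/2) * (1/2:ℝ)^r * NB)
        = (p * K^2 * (1/2) * NB) * ∑' r : ℕ, (1/2:ℝ)^r := by
      rw [← tsum_mul_left]
      congr 1; funext r; ring
    rw [this, tsum_geometric_of_lt_one (by norm_num) (by norm_num)]
    norm_num
    ring
  have hFlint : ∫⁻ ω, ENNReal.ofReal (F ω) ∂μ ≤ ENNReal.ofReal (p * K^2 * NB) := by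
    rw [hlint, ← hgeom]
    exact ENNReal.tsum_le_tsum hterm
  -- F integrable and its integral bounded
  have hFint : Integrable F μ := by
    constructor
    · exact hFmeas.aestronglyMeasurable
    · rw [hasFiniteIntegral_iff_norm]
      have : ∀ ω, ENNReal.ofReal ‖F ω‖ = ENNReal.ofReal (F ω) := by
        intro ω; rw [Real.norm_eq_abs, abs_of_nonneg (hFnn ω)]
      simp_rw [this]
      exact lt_of_le_of_lt hFlint ENNReal.ofReal_lt_top
  have hFle : ∫ ω, F ω ∂μ ≤ p * K^2 * NB := by
    rw [integral_eq_lintegral_of_nonneg_ae (ae_of_all _ hFnn) hFmeas.aestronglyMeasurable]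
    calc (∫⁻ ω, ENNReal.ofReal (F ω) ∂μ).toReal
        ≤ (ENNReal.ofReal (p * K^2 * NB)).toReal := by
          apply ENNReal.toReal_mono ENNReal.ofReal_ne_top hFlint
      _ = p * K^2 * NB := ENNReal.toReal_ofReal (by positivity)
  -- Y integrable
  have hYint : Integrable Y μ := by
    obtain ⟨h1, _⟩ := hmom 1 le_rfl
    have h2 : Integrable (fun ω => |Y ω|) μ := by
      refine h1.congr (ae_of_all _ fun ω => ?_)
      exact Real.rpow_one _
    exact h2.mono' hY.aestronglyMeasurable
      (ae_of_all _ fun ω => by rw [Real.norm_eq_abs])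
  -- pointwise bound on exp
  have hpt : ∀ ω, Real.exp (v * Y ω) ≤ 1 + v * Y ω + v^2 * F ω := by
    intro ω
    have := exp_le_quad (v * Y ω)
    have hrw : (v * Y ω)^2 * Real.exp |v * Y ω| = v^2 * F ω := by
      rw [hF]; simp only
      rw [abs_mul, mul_pow]
      ring
    linarith [this, hrw.le, hrw.ge]
  have hA : Integrable (fun ω : Ω => 1 + v * Y ω) μ := (integrable_const 1).add (hYint.const_mul v)
  have hB : Integrable (fun ω : Ω => v^2 * F ω) μ := hFint.const_mul _
  have hgint : Integrable (fun ω => 1 + v * Y ω + v^2 * F ω) μ := hA.add hB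
  have hexpint : Integrable (fun ω => Real.exp (v * Y ω)) μ := by
    refine hgint.mono' ((hY.const_mul v).exp).aestronglyMeasurable (ae_of_all _ fun ω => ?_)
    rw [Real.norm_eq_abs, abs_of_pos (Real.exp_pos _)]
    exact hpt ω
  refine ⟨hexpint, ?_⟩
  have hIg : ∫ ω, (1 + v * Y ω + v^2 * F ω) ∂μ = 1 + v^2 * ∫ ω, F ω ∂μ := by
    rw [integral_add hA hB, integral_add (integrable_const 1) (hYint.const_mul v),
      integral_const, integral_const_mul, integral_const_mul, hmean]
    simp
  calc ∫ ω, Real.exp (v * Y ω) ∂μ ≤ ∫ ω, (1 + v * Y ω + v^2 * F ω) ∂μ :=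
        integral_mono hexpint hgint hpt
    _ = 1 + v^2 * ∫ ω, F ω ∂μ := hIg
    _ ≤ 1 + v^2 * (p * K^2 * NB) := by nlinarith [hFle, sq_nonneg v]
    _ ≤ Real.exp (v^2 * (p * K^2 * NB)) := by
        linarith [Real.add_one_le_exp (v^2 * (p * K^2 * NB))]
    _ = Real.exp (p * v^2 * K^2 * NB) := by ring_nf

lemma chernoff_step (α : ℝ) (hα : 1 < α)
    (n : ℕ) (hn : 1 ≤ n)
    (Ω : Type) [MeasurableSpace Ω] (μ : Measure Ω) [IsProbabilityMeasure μ]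
    (X : Fin n → Ω → ℝ) (p : Fin n → ℝ) (K : ℝ)
    (hK : 0 < K)
    (hp : ∀ i, 0 < p i ∧ p i ≤ 1)
    (hXm : ∀ i, Measurable (X i))
    (hindep : iIndepFun X μ)
    (hmean : ∀ i, ∫ ω, X i ω ∂μ = 0)
    (hmom : ∀ i, ∀ r : ℝ, 1 ≤ r →
      Integrable (fun ω => |X i ω| ^ r) μ ∧
      ∫ ω, |X i ω| ^ r ∂μ ≤ p i * (K * r ^ (1 / α)) ^ r)
    (a : Fin n → ℝ) (lam M : ℝ) (hlam : 0 < lam) (hM : 0 < M)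
    (hsum : (∑ i, (a i) ^ 2 * p i) ≤ lam ^ 2)
    (hsup : (⨆ i, |a i|) ≤ M)
    (t : ℝ) (ht : 0 < t) (s : ℝ) (hs : 0 < s) :
    (μ {ω | t < |∑ i, a i * X i ω|}).toReal ≤
      2 * Real.exp (-(s*t) + s^2*(K^2*lam^2) *
        Real.exp ((4*Real.exp 1) ^ (1/(1 - 1/α)) * (1 + s*(K*M)) ^ (1/(1 - 1/α)))) := by
  have hα0 : (0:ℝ) < α := by linarith
  set β : ℝ := 1 - 1/α with hβ
  have hβ0 : 0 < β := by
    rw [hβ]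
    have : 1/α < 1 := by rw [div_lt_one hα0]; exact hα
    linarith
  -- the scaled variables
  set X' : Fin n → Ω → ℝ := fun i ω => a i * X i ω with hX'
  have hX'm : ∀ i, Measurable (X' i) := fun i => (hXm i).const_mul (a i)
  have hindep' : iIndepFun X' μ :=
    hindep.comp (fun i x => a i * x) (fun i => measurable_const_mul (a i))
  have haM : ∀ i, |a i| ≤ M := by
    intro i
    refine le_trans ?_ hsup
    exact le_ciSup (f := fun i => |a i|) (Set.Finite.bddAbove (Set.finite_range _)) i
  -- integrability and mgf bound for each coordinate, any v
  have hsingle : ∀ (i : Fin n) (v : ℝ),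
      Integrable (fun ω => Real.exp (v * X' i ω)) μ ∧
      mgf (X' i) μ v ≤ Real.exp ((p i * a i ^ 2) * (v^2 * K^2 *
        Real.exp ((4*Real.exp 1) ^ (1/β) * (1 + |v| * (K*M)) ^ (1/β)))) := by
    intro i v
    obtain ⟨hint, hbd⟩ := mgf_single μ (X i) (hXm i) (p i) K α hα (hp i).1.le hK
      (hmom i) (hmean i) (v * a i)
    have heq : (fun ω => Real.exp (v * a i * X i ω)) = fun ω => Real.exp (v * X' i ω) := by
      funext ω; rw [hX']; ring_nf
    rw [heq] at hint hbd
    refine ⟨hint, ?_⟩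
    rw [mgf]
    refine hbd.trans ?_
    rw [Real.exp_le_exp]
    have hNBle : Real.exp ((4*Real.exp 1) ^ (1/β) * (1 + |v * a i| * K) ^ (1/β))
        ≤ Real.exp ((4*Real.exp 1) ^ (1/β) * (1 + |v| * (K*M)) ^ (1/β)) := by
      rw [Real.exp_le_exp]
      apply mul_le_mul_of_nonneg_left _ (by positivity)
      apply Real.rpow_le_rpow (by positivity) _ (by positivity)
      have : |v * a i| * K ≤ |v| * (K * M) := by
        rw [abs_mul]
        calc |v| * |a i| * K ≤ |v| * M * K := by
              apply mul_le_mul_of_nonneg_right _ hK.le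
              exact mul_le_mul_of_nonneg_left (haM i) (abs_nonneg v)
          _ = |v| * (K * M) := by ring
      linarith
    calc p i * (v * a i)^2 * K^2 * Real.exp ((4*Real.exp 1) ^ (1/β) * (1 + |v * a i| * K) ^ (1/β))
        ≤ p i * (v * a i)^2 * K^2 * Real.exp ((4*Real.exp 1) ^ (1/β) * (1 + |v| * (K*M)) ^ (1/β)) := by
          apply mul_le_mul_of_nonneg_left hNBle (mul_nonneg (mul_nonneg (hp i).1.le (sq_nonneg _)) (sq_nonneg K))
      _ = (p i * a i ^ 2) * (v^2 * K^2 *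
          Real.exp ((4*Real.exp 1) ^ (1/β) * (1 + |v| * (K*M)) ^ (1/β))) := by ring
  -- mgf of the sum
  have hmgf_sum : ∀ v : ℝ, mgf (∑ i, X' i) μ v ≤
      Real.exp (v^2*(K^2*lam^2) *
        Real.exp ((4*Real.exp 1) ^ (1/β) * (1 + |v| * (K*M)) ^ (1/β))) := by
    intro v
    rw [hindep'.mgf_sum hX'm]
    set NB : ℝ := Real.exp ((4*Real.exp 1) ^ (1/β) * (1 + |v| * (K*M)) ^ (1/β)) with hNB
    calc ∏ i, mgf (X' i) μ v
        ≤ ∏ i, Real.exp ((p i * a i ^ 2) * (v^2 * K^2 * NB)) := by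
          apply Finset.prod_le_prod
          · intro i _; exact mgf_nonneg
          · intro i _; exact (hsingle i v).2
      _ = Real.exp (∑ i, (p i * a i ^ 2) * (v^2 * K^2 * NB)) := by
          rw [Real.exp_sum]
      _ ≤ Real.exp (v^2*(K^2*lam^2) * NB) := by
          rw [Real.exp_le_exp]
          have h1 : ∑ i, (p i * a i ^ 2) * (v^2 * K^2 * NB)
              = (∑ i, a i ^ 2 * p i) * (v^2 * K^2 * NB) := by
            rw [Finset.sum_mul]
            congr 1; funext i; ring
          rw [h1]
          have h2 : (0:ℝ) ≤ v^2 * K^2 * NB := by positivity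
          calc (∑ i, a i ^ 2 * p i) * (v^2 * K^2 * NB) ≤ lam^2 * (v^2 * K^2 * NB) :=
                mul_le_mul_of_nonneg_right hsum h2
            _ = v^2*(K^2*lam^2) * NB := by ring
  -- S = sum of X'
  set S : Ω → ℝ := ∑ i, X' i with hSdef
  have hSval : ∀ ω, S ω = ∑ i, a i * X i ω := by
    intro ω
    rw [hSdef, Finset.sum_apply]
  have hSint : ∀ v : ℝ, Integrable (fun ω => Real.exp (v * S ω)) μ := by
    intro v
    exact hindep'.integrable_exp_mul_sum hX'm (fun i _ => (hsingle i v).1)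
  -- Chernoff both tails
  have hup : (μ {ω | t ≤ S ω}).toReal ≤ Real.exp (-s * t) * mgf S μ s :=
    measure_ge_le_exp_mul_mgf t hs.le (hSint s)
  have hlo : (μ {ω | S ω ≤ -t}).toReal ≤ Real.exp (-s * t) * mgf S μ (-s) := by
    have := measure_le_le_exp_mul_mgf (X := S) (μ := μ) (t := -s) (-t)
      (by linarith) (hSint (-s))
    convert this using 2
    ring
    rfl
    rw [neg_neg, mul_neg, neg_mul]
  -- combine
  set B : ℝ := s^2*(K^2*lam^2) *
      Real.exp ((4*Real.exp 1) ^ (1/β) * (1 + s*(K*M)) ^ (1/β)) with hB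
  have habs : |s| = s := abs_of_pos hs
  have hmgfs : mgf S μ s ≤ Real.exp B := by
    have := hmgf_sum s
    rw [habs] at this
    exact this
  have hmgfns : mgf S μ (-s) ≤ Real.exp B := by
    have h := hmgf_sum (-s)
    rw [abs_neg, habs, neg_sq] at h
    exact h
  have hgoal_eq : {ω | t < |∑ i, a i * X i ω|} = {ω | t < |S ω|} := by
    ext ω
    simp only [Set.mem_setOf_eq, hSval]
  rw [hgoal_eq]
  have hsub : {ω | t < |S ω|} ⊆ {ω | t ≤ S ω} ∪ {ω | S ω ≤ -t} := by
    intro ω hω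
    simp only [Set.mem_setOf_eq] at hω
    simp only [Set.mem_setOf_eq, Set.mem_union]
    rcases lt_abs.mp hω with h | h
    · left; linarith
    · right; linarith
  have hμle : μ {ω | t < |S ω|} ≤ μ {ω | t ≤ S ω} + μ {ω | S ω ≤ -t} :=
    (measure_mono hsub).trans (measure_union_le _ _)
  have hne1 : μ {ω | t ≤ S ω} ≠ ⊤ := measure_ne_top μ _
  have hne2 : μ {ω | S ω ≤ -t} ≠ ⊤ := measure_ne_top μ _
  calc (μ {ω | t < |S ω|}).toReal
      ≤ (μ {ω | t ≤ S ω} + μ {ω | S ω ≤ -t}).toReal :=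
        ENNReal.toReal_mono (by finiteness) hμle
    _ = (μ {ω | t ≤ S ω}).toReal + (μ {ω | S ω ≤ -t}).toReal :=
        ENNReal.toReal_add hne1 hne2
    _ ≤ Real.exp (-s * t) * mgf S μ s + Real.exp (-s * t) * mgf S μ (-s) := by
        exact add_le_add hup hlo
    _ ≤ Real.exp (-s * t) * Real.exp B + Real.exp (-s * t) * Real.exp B := by
        apply add_le_add
        · exact mul_le_mul_of_nonneg_left hmgfs (Real.exp_pos _).le
        · exact mul_le_mul_of_nonneg_left hmgfns (Real.exp_pos _).le
    _ = 2 * Real.exp (-(s*t) + B) := by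
        rw [← Real.exp_add]
        ring_nf

set_option maxHeartbeats 2000000 in
lemma exists_s (β : ℝ) (hβ0 : 0 < β) (hβ1 : β < 1)
    (V D t : ℝ) (hV : 0 < V) (hD : 0 < D) (ht : 0 < t) :
    ∃ s : ℝ, 0 < s ∧
      -(s*t) + s^2*V * Real.exp ((4*Real.exp 1)^(1/β) * (1 + s*D)^(1/β))
        ≤ -((min (Real.exp (-(2*(8*Real.exp 1)^(1/β)))/4)
              (min (1/2) ((min 1 ((1/(2*(8*Real.exp 1)^(1/β)))^β))/4))) *
            min (t^2/V)
              ((t/D) * max 1 (Hfun β (t*D/((6*Real.exp (2*(8*Real.exp 1)^(1/β)))*V))))) := by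
  have he1 : (1:ℝ) ≤ Real.exp 1 := by linarith [Real.add_one_le_exp 1]
  set c1 : ℝ := (8*Real.exp 1)^(1/β) with hc1def
  have hc1 : 0 < c1 := Real.rpow_pos_of_pos (by linarith) _
  set c2 : ℝ := (4*Real.exp 1)^(1/β) with hc2def
  have hc2 : 0 < c2 := Real.rpow_pos_of_pos (by linarith) _
  have hE1 : c2 * 2^((1:ℝ)/β) = c1 := by
    rw [hc2def, hc1def, ← Real.mul_rpow (by linarith) (by norm_num)]
    congr 1
    ring
  set ε : ℝ := Real.exp (-(2*c1))/2 with hεdef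
  have hε : 0 < ε := by positivity
  set δ : ℝ := min 1 ((1/(2*c1))^β) with hδdef
  have hδ0 : 0 < δ := by
    apply lt_min one_pos
    exact Real.rpow_pos_of_pos (by positivity) _
  have hδ1 : δ ≤ 1 := min_le_left _ _
  set C : ℝ := min (Real.exp (-(2*c1))/4) (min (1/2) (δ/4)) with hCdef
  have hC0 : 0 < C := by
    apply lt_min (by positivity)
    apply lt_min (by norm_num)
    positivity
  set c : ℝ := 6*Real.exp (2*c1) with hcdef
  have hc : 0 < c := by positivity
  set T : ℝ := t*D/(c*V) with hTdef
  set H : ℝ := Hfun β T with hHdef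
  set mval : ℝ := min (t^2/V) ((t/D) * max 1 H) with hmvaldef
  have hmax1 : (1:ℝ) ≤ max 1 H := le_max_left _ _
  have hmval0 : 0 ≤ mval := by
    apply le_min (by positivity)
    have h1 : (0:ℝ) < t/D := by positivity
    exact mul_nonneg h1.le (le_trans zero_le_one hmax1)
  have hCε : C ≤ ε/2 := by
    calc C ≤ Real.exp (-(2*c1))/4 := min_le_left _ _
      _ = ε/2 := by rw [hεdef]; ring
  have hChalf : C ≤ 1/2 := le_trans (min_le_right _ _) (min_le_left _ _)
  have hCδ : C ≤ δ/4 := le_trans (min_le_right _ _) (min_le_right _ _)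
  -- generic reduction : if s > 0, s²V·E(s) ≤ (1/2)(s*t) and C*mval ≤ (1/2)(s*t) then done
  have hreduce : ∀ s : ℝ, 0 < s →
      s^2*V * Real.exp (c2 * (1 + s*D)^(1/β)) ≤ (1/2)*(s*t) →
      C * mval ≤ (1/2)*(s*t) →
      -(s*t) + s^2*V * Real.exp (c2 * (1 + s*D)^(1/β)) ≤ -(C * mval) := by
    intro s _ h1 h2
    linarith
  rcases le_or_gt (ε*t*D/V) 1 with hreg | hreg
  · -- Regime I
    refine ⟨ε*t/V, by positivity, ?_⟩
    apply hreduce _ (by positivity)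
    · -- Chernoff term
      set s : ℝ := ε*t/V with hsdef
      have hsD : s*D ≤ 1 := by
        rw [hsdef]
        calc ε*t/V*D = ε*t*D/V := by ring
          _ ≤ 1 := hreg
      have hsD0 : 0 ≤ s*D := by positivity
      have hexp_le : Real.exp (c2 * (1 + s*D)^(1/β)) ≤ Real.exp c1 := by
        rw [Real.exp_le_exp, ← hE1]
        apply mul_le_mul_of_nonneg_left _ hc2.le
        apply Real.rpow_le_rpow (by linarith) (by linarith) (by positivity)
      have hεe : ε * Real.exp c1 ≤ 1/2 := by
        have h0 : Real.exp (-(2*c1)) * Real.exp c1 = Real.exp (-c1) := by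
          rw [← Real.exp_add]; ring_nf
        have h2 : Real.exp (-c1) ≤ 1 := Real.exp_le_one_iff.mpr (by linarith)
        calc ε * Real.exp c1 = Real.exp (-(2*c1)) * Real.exp c1 / 2 := by rw [hεdef]; ring
          _ = Real.exp (-c1) / 2 := by rw [h0]
          _ ≤ 1/2 := by linarith
      have hst : s*t = ε*(t^2/V) := by rw [hsdef]; field_simp
      have h3 : s^2*V*Real.exp c1 = (ε*Real.exp c1) * (ε * (t^2/V)) := by
        rw [hsdef]; field_simp
      calc s^2*V * Real.exp (c2 * (1 + s*D)^(1/β)) ≤ s^2*V * Real.exp c1 :=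
            mul_le_mul_of_nonneg_left hexp_le (by positivity)
        _ = (ε*Real.exp c1) * (ε * (t^2/V)) := h3
        _ ≤ (1/2) * (ε * (t^2/V)) :=
            mul_le_mul_of_nonneg_right hεe (by positivity)
        _ = (1/2)*(s*t) := by rw [hst]
    · -- C*mval small
      have h1 : C * mval ≤ (ε/2) * (t^2/V) := by
        calc C * mval ≤ (ε/2) * mval := mul_le_mul_of_nonneg_right hCε hmval0
          _ ≤ (ε/2) * (t^2/V) :=
              mul_le_mul_of_nonneg_left (min_le_left _ _) (by positivity)
      have h2 : (ε/2) * (t^2/V) = (1/2)*((ε*t/V)*t) := by ring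
      rw [← h2]; exact h1
  · -- Regime II
    have hB' : 2*Real.exp (2*c1)*V < t*D := by
      have h1 : V < ε*t*D := by
        rw [lt_div_iff₀ hV] at hreg
        linarith
      rw [hεdef] at h1
      have h2 : Real.exp (-(2*c1)) * Real.exp (2*c1) = 1 := by
        rw [← Real.exp_add]; ring_nf; exact Real.exp_zero
      have h3 := mul_lt_mul_of_pos_left h1
        (show (0:ℝ) < 2*Real.exp (2*c1) by positivity)
      have h4 : 2*Real.exp (2*c1) * (Real.exp (-(2*c1))/2*t*D) = t*D := by
        linear_combination (t*D) * h2
      have h5 : 2*Real.exp (2*c1) * (Real.exp (-(2*c1))/2 * t * D)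
          = 2*Real.exp (2*c1) * (Real.exp (-(2*c1))/2*t*D) := by ring
      linarith
    have hec : Real.exp c1 ≤ Real.exp (2*c1) := by
      rw [Real.exp_le_exp]; linarith
    rcases le_or_gt H 1 with hH | hH
    · -- B1 : max = 1
      refine ⟨1/D, by positivity, ?_⟩
      apply hreduce _ (by positivity)
      · have hsD : (1/D)*D = 1 := by field_simp
        have hexp_le : Real.exp (c2 * (1 + (1/D)*D)^(1/β)) ≤ Real.exp c1 := by
          rw [Real.exp_le_exp, hsD, ← hE1]
          apply mul_le_mul_of_nonneg_left _ hc2.le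
          norm_num
        have key : 2*Real.exp c1*V ≤ t*D := by
          have h := mul_le_mul_of_nonneg_right hec hV.le
          linarith
        have h2 : (1/D)^2*V*Real.exp c1 ≤ (1/2)*((1/D)*t) := by
          have h3 := mul_le_mul_of_nonneg_left key (by positivity : (0:ℝ) ≤ 1/(2*D^2))
          have e1 : 1/(2*D^2) * (2*Real.exp c1*V) = (1/D)^2*V*Real.exp c1 := by
            field_simp
          have e2 : 1/(2*D^2) * (t*D) = (1/2)*((1/D)*t) := by
            field_simp
          rw [e1, e2] at h3
          exact h3
        calc (1/D)^2*V * Real.exp (c2 * (1 + (1/D)*D)^(1/β))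
            ≤ (1/D)^2*V * Real.exp c1 :=
              mul_le_mul_of_nonneg_left hexp_le (by positivity)
          _ ≤ (1/2)*((1/D)*t) := h2
      · have hmaxeq : max 1 H = 1 := max_eq_left hH
        have h1 : C * mval ≤ (1/2) * (t/D) := by
          calc C * mval ≤ (1/2) * mval := mul_le_mul_of_nonneg_right hChalf hmval0
            _ ≤ (1/2) * ((t/D) * max 1 H) :=
                mul_le_mul_of_nonneg_left (min_le_right _ _) (by norm_num)
            _ = (1/2) * (t/D) := by rw [hmaxeq, mul_one]
        have h2 : (1/2) * (t/D) = (1/2)*((1/D)*t) := by ring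
        rw [← h2]; exact h1
    · -- B2 : H > 1
      have hcond : (Real.exp 1 / β)^β < T := by
        by_contra hcon
        push_neg at hcon
        have : H = 0 := by
          rw [hHdef, Hfun, if_neg (by push_neg; exact hcon)]
        linarith
      have heβ1 : (1:ℝ) < Real.exp 1 / β := by
        rw [lt_div_iff₀ hβ0]
        nlinarith
      have hT1 : (1:ℝ) < T := by
        have : (1:ℝ) ≤ (Real.exp 1 / β)^β := by
          apply Real.one_le_rpow heβ1.le hβ0.le
        linarith
      have hT0 : (0:ℝ) < T := by linarith
      set L : ℝ := Real.log T with hLdef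
      have hL0 : 0 < L := Real.log_pos hT1
      have hHle : H ≤ (2*L)^β := Hfun_le β T hβ0 hβ1 hT1
      set x : ℝ := max 1 (δ * L^β) with hxdef
      have hx1 : (1:ℝ) ≤ x := le_max_left _ _
      have hx0 : (0:ℝ) < x := by linarith
      have hLb0 : (0:ℝ) ≤ L^β := Real.rpow_nonneg hL0.le β
      have hxub : x ≤ 1 + L := by
        have h1 : δ * L^β ≤ L^β := by
          have := mul_le_mul_of_nonneg_right hδ1 hLb0
          linarith
        have h2 : L^β ≤ 1 + L := by
          rcases le_total L 1 with h | h
          · have : L^β ≤ 1 := Real.rpow_le_one hL0.le h hβ0.le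
            linarith
          · have : L^β ≤ L^(1:ℝ) := Real.rpow_le_rpow_of_exponent_le h hβ1.le
            rw [Real.rpow_one] at this
            linarith
        apply max_le (by linarith) (by linarith)
      -- x^(1/β) control
      have hxrpow : c1 * x^(1/β) ≤ c1 + L/2 := by
        have hδr : δ^((1:ℝ)/β) ≤ 1/(2*c1) := by
          have h1 : δ ≤ (1/(2*c1))^β := min_le_right _ _
          have h2 : δ^((1:ℝ)/β) ≤ ((1/(2*c1))^β)^((1:ℝ)/β) :=
            Real.rpow_le_rpow hδ0.le h1 (by positivity)
          have h3 : ((1/(2*c1))^β)^((1:ℝ)/β) = 1/(2*c1) := by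
            rw [← Real.rpow_mul (by positivity), mul_one_div, div_self (ne_of_gt hβ0),
              Real.rpow_one]
          rwa [h3] at h2
        rcases le_total (δ * L^β) 1 with h | h
        · have hxeq : x = 1 := max_eq_left h
          rw [hxeq, Real.one_rpow, mul_one]
          linarith
        · have hxeq : x = δ * L^β := max_eq_right h
          have hxval : x^((1:ℝ)/β) = δ^((1:ℝ)/β) * L := by
            rw [hxeq, Real.mul_rpow hδ0.le hLb0, ← Real.rpow_mul hL0.le,
              mul_one_div, div_self (ne_of_gt hβ0), Real.rpow_one]
          rw [hxval]
          have h3 : c1 * (δ^((1:ℝ)/β) * L) ≤ c1 * ((1/(2*c1)) * L) := by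
            apply mul_le_mul_of_nonneg_left _ hc1.le
            apply mul_le_mul_of_nonneg_right hδr hL0.le
          have h4 : c1 * ((1/(2*c1)) * L) = L/2 := by
            field_simp
          rw [h4] at h3
          linarith
      set R : ℝ := Real.exp (L/2) with hRdef
      have hR0 : 0 < R := Real.exp_pos _
      have hR1 : 1 ≤ R := by
        rw [hRdef, Real.one_le_exp_iff]
        linarith
      have hRsq : R^2 = T := by
        rw [hRdef, ← Real.exp_nat_mul]
        have : (2:ℝ) * (L/2) = L := by ring
        rw [show ((2:ℕ):ℝ) * (L/2) = L by push_cast; ring, hLdef, Real.exp_log hT0]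
      have hLR : L ≤ 2*R - 2 := by
        have h1 : Real.log R ≤ R - 1 := Real.log_le_sub_one_of_pos hR0
        rw [hRdef, Real.log_exp] at h1
        linarith
      refine ⟨x/D, by positivity, ?_⟩
      apply hreduce _ (by positivity)
      · -- Chernoff condition
        have hsD : (x/D)*D = x := by field_simp
        have hexp_le : Real.exp (c2 * (1 + (x/D)*D)^(1/β)) ≤ Real.exp c1 * R := by
          rw [hsD]
          have h1 : c2 * (1 + x)^(1/β) ≤ c1 * x^(1/β) := by
            have h2 : (1 + x)^(1/β) ≤ (2*x)^(1/β) :=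
              Real.rpow_le_rpow (by linarith) (by linarith) (by positivity)
            have h3 : (2*x)^(1/β) = 2^((1:ℝ)/β) * x^(1/β) :=
              Real.mul_rpow (by norm_num) hx0.le
            calc c2 * (1 + x)^(1/β) ≤ c2 * (2*x)^(1/β) :=
                  mul_le_mul_of_nonneg_left h2 hc2.le
              _ = (c2 * 2^((1:ℝ)/β)) * x^(1/β) := by rw [h3]; ring
              _ = c1 * x^(1/β) := by rw [hE1]
          have h4 : c2 * (1 + x)^(1/β) ≤ c1 + L/2 := h1.trans hxrpow
          calc Real.exp (c2 * (1 + x)^(1/β)) ≤ Real.exp (c1 + L/2) :=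
                Real.exp_le_exp.mpr h4
            _ = Real.exp c1 * R := by rw [Real.exp_add, hRdef]
        -- key : x * (exp c1 * R) * V ≤ t*D/2
        have hkey : x * (Real.exp c1 * R) * V ≤ t*D/2 := by
          have h1 : x * R ≤ 2*R^2 := by
            have ha : x * R ≤ (1+L) * R := mul_le_mul_of_nonneg_right hxub hR0.le
            have hb : (1+L) * R ≤ (2*R - 1) * R :=
              mul_le_mul_of_nonneg_right (by linarith) hR0.le
            have hcq : (2*R - 1) * R = 2*R^2 - R := by ring
            linarith
          have h2 : x * (Real.exp c1 * R) * V ≤ 2*T*Real.exp (2*c1)*V := by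
            calc x * (Real.exp c1 * R) * V = (x * R) * Real.exp c1 * V := by ring
              _ ≤ (2*R^2) * Real.exp c1 * V := by
                  apply mul_le_mul_of_nonneg_right _ hV.le
                  exact mul_le_mul_of_nonneg_right h1 (Real.exp_pos _).le
              _ = (2*T) * Real.exp c1 * V := by rw [hRsq]
              _ ≤ (2*T) * Real.exp (2*c1) * V := by
                  apply mul_le_mul_of_nonneg_right _ hV.le
                  exact mul_le_mul_of_nonneg_left hec (by linarith)
              _ = 2*T*Real.exp (2*c1)*V := by ring
          have h3 : 2*T*Real.exp (2*c1)*V = t*D/3 := by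
            rw [hTdef, hcdef]
            field_simp
            ring
          rw [h3] at h2
          have htD : (0:ℝ) < t*D := by positivity
          linarith
        have hstep : (x/D)^2*V * (Real.exp c1 * R) ≤ (1/2)*((x/D)*t) := by
          have e1 : x/(D^2) * (x * (Real.exp c1 * R) * V) = (x/D)^2*V*(Real.exp c1 * R) := by
            field_simp
          have e2 : x/(D^2) * (t*D/2) = (1/2)*((x/D)*t) := by
            field_simp
          have h6 := mul_le_mul_of_nonneg_left hkey (by positivity : (0:ℝ) ≤ x/(D^2))
          rw [e1, e2] at h6
          exact h6
        calc (x/D)^2*V * Real.exp (c2 * (1 + (x/D)*D)^(1/β))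
            ≤ (x/D)^2*V * (Real.exp c1 * R) :=
              mul_le_mul_of_nonneg_left hexp_le (by positivity)
          _ ≤ (1/2)*((x/D)*t) := hstep
      · -- C*mval vs (1/2)(x/D)t
        have hmaxeq : max 1 H = H := max_eq_right hH.le
        have h2L : (2*L)^β ≤ 2 * L^β := by
          rw [Real.mul_rpow (by norm_num) hL0.le]
          apply mul_le_mul_of_nonneg_right _ hLb0
          calc (2:ℝ)^β ≤ 2^(1:ℝ) := Real.rpow_le_rpow_of_exponent_le (by norm_num) hβ1.le
            _ = 2 := Real.rpow_one 2
        have h1 : C * mval ≤ (δ/4) * ((t/D) * (2 * L^β)) := by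
          calc C * mval ≤ (δ/4) * mval := mul_le_mul_of_nonneg_right hCδ hmval0
            _ ≤ (δ/4) * ((t/D) * max 1 H) :=
                mul_le_mul_of_nonneg_left (min_le_right _ _) (by positivity)
            _ = (δ/4) * ((t/D) * H) := by rw [hmaxeq]
            _ ≤ (δ/4) * ((t/D) * (2 * L^β)) := by
                apply mul_le_mul_of_nonneg_left _ (by positivity)
                apply mul_le_mul_of_nonneg_left (hHle.trans h2L) (by positivity)
        have h2 : (δ/4) * ((t/D) * (2 * L^β)) ≤ (1/2)*((x/D)*t) := by
          have h3 : δ * L^β ≤ x := le_max_right _ _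
          have h4 : (δ/4) * ((t/D) * (2 * L^β)) = (1/2)*(((δ*L^β)/D)*t) := by ring
          rw [h4]
          have h5 : (δ*L^β)/D ≤ x/D := by gcongr
          apply mul_le_mul_of_nonneg_left _ (by norm_num : (0:ℝ) ≤ 1/2)
          exact mul_le_mul_of_nonneg_right h5 ht.le
        linarith

end Aux

/-- **Bennett-type tail bound for the linear form** (Theorem 1.5): for `α > 1`,
with `β = 1 - 1/α`, `Σ aᵢ² pᵢ ≤ λ²`, `‖a‖_∞ ≤ M` and `T = tM/(c_α K λ²)`,
`P(|Σ aᵢ Xᵢ| > t) ≤ e² exp(-C_α min{t²/(K²λ²), (t/(KM)) max{1, H_α(T)}})`. -/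
theorem sparse_bennett_linear (α : ℝ) (hα : 1 < α) :
    ∃ C c : ℝ, 0 < C ∧ 0 < c ∧
      ∀ (n : ℕ), 1 ≤ n →
      ∀ (Ω : Type) [MeasurableSpace Ω] (μ : Measure Ω) [IsProbabilityMeasure μ]
        (X : Fin n → Ω → ℝ) (p : Fin n → ℝ) (K : ℝ),
        0 < K →
        (∀ i, 0 < p i ∧ p i ≤ 1) →
        (∀ i, Measurable (X i)) →
        iIndepFun X μ →
        (∀ i, ∫ ω, X i ω ∂μ = 0) →
        (∀ i, ∀ r : ℝ, 1 ≤ r →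
          Integrable (fun ω => |X i ω| ^ r) μ ∧
          ∫ ω, |X i ω| ^ r ∂μ ≤ p i * (K * r ^ (1 / α)) ^ r) →
        ∀ (a : Fin n → ℝ) (lam M : ℝ), 0 < lam → 0 < M →
          (∑ i, (a i) ^ 2 * p i) ≤ lam ^ 2 →
          (⨆ i, |a i|) ≤ M →
        ∀ t : ℝ, 0 < t →
          (μ {ω | t < |∑ i, a i * X i ω|}).toReal ≤
            Real.exp 2 * Real.exp (-(C * min
              (t ^ 2 / (K ^ 2 * lam ^ 2))
              ((t / (K * M)) *
                max 1 (Hfun (1 - 1 / α) (t * M / (c * K * lam ^ 2)))))) := by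
  have hα0 : (0:ℝ) < α := by linarith
  have hβ0 : 0 < 1 - 1/α := by
    have : 1/α < 1 := by rw [div_lt_one hα0]; exact hα
    linarith
  have hβ1 : 1 - 1/α < 1 := by
    have : 0 < 1/α := by positivity
    linarith
  have he1 : (1:ℝ) ≤ Real.exp 1 := by linarith [Real.add_one_le_exp 1]
  have hc1 : (0:ℝ) < (8*Real.exp 1)^(1/(1 - 1/α)) :=
    Real.rpow_pos_of_pos (by linarith) _
  refine ⟨min (Real.exp (-(2*(8*Real.exp 1)^(1/(1 - 1/α))))/4)
      (min (1/2) ((min 1 ((1/(2*(8*Real.exp 1)^(1/(1 - 1/α))))^(1 - 1/α)))/4)),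
    6*Real.exp (2*(8*Real.exp 1)^(1/(1 - 1/α))), ?_, by positivity, ?_⟩
  · apply lt_min (by positivity)
    apply lt_min (by norm_num)
    have : (0:ℝ) < min 1 ((1/(2*(8*Real.exp 1)^(1/(1 - 1/α))))^(1 - 1/α)) := by
      apply lt_min one_pos
      exact Real.rpow_pos_of_pos (by positivity) _
    positivity
  intro n hn Ω _ μ _ X p K hK hp hXm hindep hmean hmom a lam M hlam hM hsum hsup t ht
  obtain ⟨s, hs, hbound⟩ := exists_s (1 - 1/α) hβ0 hβ1
    (K^2*lam^2) (K*M) t (by positivity) (by positivity) ht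
  have hcher := chernoff_step α hα n hn Ω μ X p K hK hp hXm hindep hmean hmom
    a lam M hlam hM hsum hsup t ht s hs
  -- identify the Hfun arguments
  have hTeq : t*(K*M)/((6*Real.exp (2*(8*Real.exp 1)^(1/(1 - 1/α))))*(K^2*lam^2))
      = t * M / ((6*Real.exp (2*(8*Real.exp 1)^(1/(1 - 1/α)))) * K * lam ^ 2) := by
    rw [div_eq_div_iff (by positivity) (by positivity)]
    ring
  rw [hTeq] at hbound
  have h2exp : (2:ℝ) ≤ Real.exp 2 := by linarith [Real.add_one_le_exp 2]
  calc (μ {ω | t < |∑ i, a i * X i ω|}).toReal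
      ≤ 2 * Real.exp (-(s*t) + s^2*(K^2*lam^2) *
          Real.exp ((4*Real.exp 1) ^ (1/(1 - 1/α)) * (1 + s*(K*M)) ^ (1/(1 - 1/α)))) := hcher
    _ ≤ Real.exp 2 * Real.exp (-(min (Real.exp (-(2*(8*Real.exp 1)^(1/(1 - 1/α))))/4)
            (min (1/2) ((min 1 ((1/(2*(8*Real.exp 1)^(1/(1 - 1/α))))^(1 - 1/α)))/4)) * min
              (t ^ 2 / (K ^ 2 * lam ^ 2))
              ((t / (K * M)) *
                max 1 (Hfun (1 - 1 / α)
                  (t * M / ((6*Real.exp (2*(8*Real.exp 1)^(1/(1 - 1/α)))) * K * lam ^ 2)))))) := by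
        apply mul_le_mul h2exp _ (Real.exp_pos _).le (Real.exp_pos _).le
        rw [Real.exp_le_exp]
        exact hbound
end

section
/- Fix a real number α ∈ (0,∞) and set C'_α := 8^{max{1, 1/α}} · e². For every n ≥ 1, let X = (X_1,…,X_n) be a random vector with independent centered sparse α-subexponential components with sparsity parameters p_1,…,p_n ∈ (0,1] and constant K > 0, let a ∈ ℝⁿ, and set λ := √( Σ_{i=1}^n a_i² p_i ). Then for every even integer r ≥ 2, ( E|Σ_{i=1}^n a_i X_i|^r )^{1/r} ≤ C'_α · K · max{ r^{max{1, 1/α}} ‖a‖_∞, √r · λ }. -/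
open MeasureTheory ProbabilityTheory Finset Real

lemma aux_pow_le_factorial_mul_exp (n : ℕ) :
    (n : ℝ) ^ n ≤ (n.factorial : ℝ) * Real.exp 1 ^ n := by
  induction n with
  | zero => simp
  | succ m ih =>
    have h1 : ((m : ℝ) + 1) ^ m ≤ (m : ℝ) ^ m * Real.exp 1 := by
      rcases Nat.eq_zero_or_pos m with hm | hm
      · subst hm; simpa using Real.one_le_exp (by norm_num)
      · have hm' : (0 : ℝ) < m := by exact_mod_cast hm
        have h2 : (m : ℝ) + 1 ≤ m * Real.exp (1 / m) := by
          have h3 := Real.add_one_le_exp (1 / (m : ℝ))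
          calc (m : ℝ) + 1 = m * (1 / m + 1) := by field_simp; ring
          _ ≤ m * Real.exp (1 / m) := mul_le_mul_of_nonneg_left h3 hm'.le
        calc ((m : ℝ) + 1) ^ m ≤ ((m : ℝ) * Real.exp (1 / (m : ℝ))) ^ m :=
              pow_le_pow_left₀ (by positivity) h2 m
        _ = (m : ℝ) ^ m * Real.exp (1 / (m : ℝ)) ^ m := mul_pow _ _ _
        _ = (m : ℝ) ^ m * Real.exp 1 := by
            rw [← Real.exp_nat_mul]; congr 1; field_simp
    have hnn : (0 : ℝ) ≤ (m : ℝ) + 1 := by positivity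
    calc ((m + 1 : ℕ) : ℝ) ^ (m + 1) = ((m : ℝ) + 1) * ((m : ℝ) + 1) ^ m := by
          push_cast; ring
    _ ≤ ((m : ℝ) + 1) * ((m : ℝ) ^ m * Real.exp 1) := mul_le_mul_of_nonneg_left h1 hnn
    _ ≤ ((m : ℝ) + 1) * ((m.factorial : ℝ) * Real.exp 1 ^ m * Real.exp 1) :=
        mul_le_mul_of_nonneg_left
          (mul_le_mul_of_nonneg_right ih (Real.exp_pos 1).le) hnn
    _ = ((m + 1).factorial : ℝ) * Real.exp 1 ^ (m + 1) := by
        rw [Nat.factorial_succ]; push_cast; ring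

lemma aux_odd_numeric (l : ℕ) :
    ((2 * l : ℕ) : ℝ) ^ l * ((2 * l + 2 : ℕ) : ℝ) ^ (l + 1) ≤
      2 * ((2 * l + 1 : ℕ) : ℝ) ^ (2 * l + 1) := by
  have h1 : ((2 * l : ℕ) : ℝ) ^ l * ((2 * l + 2 : ℕ) : ℝ) ^ l ≤ ((2 * l + 1 : ℕ) : ℝ) ^ (2 * l) := by
    have h0 : ((2 * l : ℕ) : ℝ) ^ l * ((2 * l + 2 : ℕ) : ℝ) ^ l
        = (((2 * l : ℕ) : ℝ) * ((2 * l + 2 : ℕ) : ℝ)) ^ l := (mul_pow _ _ _).symm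
    rw [h0]
    have h2 : (((2 * l : ℕ) : ℝ) * ((2 * l + 2 : ℕ) : ℝ)) ≤ ((2 * l + 1 : ℕ) : ℝ) ^ 2 := by
      push_cast; nlinarith [sq_nonneg ((l : ℝ))]
    calc (((2 * l : ℕ) : ℝ) * ((2 * l + 2 : ℕ) : ℝ)) ^ l ≤ (((2 * l + 1 : ℕ) : ℝ) ^ 2) ^ l :=
          pow_le_pow_left₀ (by positivity) h2 l
    _ = ((2 * l + 1 : ℕ) : ℝ) ^ (2 * l) := by rw [← pow_mul, mul_comm]
  have h3 : ((2 * l + 2 : ℕ) : ℝ) ≤ 2 * ((2 * l + 1 : ℕ) : ℝ) := by push_cast; linarith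
  calc ((2 * l : ℕ) : ℝ) ^ l * ((2 * l + 2 : ℕ) : ℝ) ^ (l + 1)
      = (((2 * l : ℕ) : ℝ) ^ l * ((2 * l + 2 : ℕ) : ℝ) ^ l) * ((2 * l + 2 : ℕ) : ℝ) := by ring
  _ ≤ ((2 * l + 1 : ℕ) : ℝ) ^ (2 * l) * (2 * ((2 * l + 1 : ℕ) : ℝ)) :=
      mul_le_mul h1 h3 (by positivity) (by positivity)
  _ = 2 * ((2 * l + 1 : ℕ) : ℝ) ^ (2 * l + 1) := by ring

lemma aux_amgm (u : ℝ) (hu : 0 < u) (b : ℝ) (l : ℕ) :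
    |b|^(2*l+1) ≤ (u * |b|^(2*l) + u⁻¹ * |b|^(2*l+2))/2 := by
  have p1 : |b|^(2*l) = |b|^l * |b|^l := by rw [← pow_add]; congr 1; ring
  have p2 : |b|^(2*l+2) = |b|^(l+1) * |b|^(l+1) := by rw [← pow_add]; congr 1; ring
  have p3 : |b|^(2*l+1) = |b|^l * |b|^(l+1) := by rw [← pow_add]; congr 1; ring
  rw [p1, p2, p3]
  have e1 : Real.sqrt u ^ 2 = u := Real.sq_sqrt hu.le
  have e2 : Real.sqrt u⁻¹ ^ 2 = u⁻¹ := Real.sq_sqrt (by positivity)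
  have e3 : Real.sqrt u * Real.sqrt u⁻¹ = 1 := by
    rw [← Real.sqrt_mul hu.le, mul_inv_cancel₀ hu.ne', Real.sqrt_one]
  have hs : 0 ≤ u*(|b|^l)^2 - 2*(|b|^l*|b|^(l+1)) + u⁻¹*(|b|^(l+1))^2 := by
    calc (0:ℝ) ≤ (Real.sqrt u * |b|^l - Real.sqrt u⁻¹ * |b|^(l+1))^2 := sq_nonneg _
    _ = Real.sqrt u^2*(|b|^l)^2 - 2*(Real.sqrt u*Real.sqrt u⁻¹)*(|b|^l*|b|^(l+1))
        + Real.sqrt u⁻¹^2*(|b|^(l+1))^2 := by ring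
    _ = u*(|b|^l)^2 - 2*(|b|^l*|b|^(l+1)) + u⁻¹*(|b|^(l+1))^2 := by rw [e1, e2, e3]; ring
  nlinarith [hs]

lemma aux_odd_step (tinv D E P I1 I2 : ℝ) (htinv : 0 < tinv) (hD : 0 < D) (hE : 0 < E)
    (hP : 0 ≤ P) (l : ℕ)
    (h1 : I1 ≤ D * D * tinv^(2*l) * P) (h2 : I2 ≤ E * E * tinv^(2*l+2) * P) :
    ((E/D*tinv) * I1 + (E/D*tinv)⁻¹ * I2)/2 ≤ D * E * tinv^(2*l+1) * P := by
  have hu : 0 < E/D*tinv := by positivity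
  have e4 : (E/D*tinv) * (D * D * tinv^(2*l) * P) = D * E * tinv^(2*l+1) * P := by
    rw [pow_succ]; field_simp
  have e5 : (E/D*tinv)⁻¹ * (E * E * tinv^(2*l+2) * P) = D * E * tinv^(2*l+1) * P := by
    have h : tinv^(2*l+2) = tinv^(2*l+1) * tinv := by rw [pow_succ]
    rw [h]; field_simp
  calc ((E/D*tinv) * I1 + (E/D*tinv)⁻¹ * I2)/2
      ≤ ((E/D*tinv) * (D*D*tinv^(2*l)*P) + (E/D*tinv)⁻¹ * (E*E*tinv^(2*l+2)*P))/2 := by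
        have m1 := mul_le_mul_of_nonneg_left h1 hu.le
        have m2 := mul_le_mul_of_nonneg_left h2 (inv_pos.mpr hu).le
        linarith
  _ = D*E*tinv^(2*l+1)*P := by rw [e4, e5]; ring

set_option maxHeartbeats 2000000 in
/-- **Moment bound for the linear form** (Lemma 5.3): with `C'_α = 8^{max{1,1/α}} e²`,
for every even `r ≥ 2`,
`‖Σ aᵢ Xᵢ‖_{L_r} ≤ C'_α K max{r^{max{1,1/α}} ‖a‖_∞, √r λ}` where `λ = √(Σ aᵢ² pᵢ)`. -/
theorem sparse_linear_moment (α : ℝ) (hα : 0 < α)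
    (n : ℕ) (hn : 1 ≤ n)
    (Ω : Type) [MeasurableSpace Ω] (μ : Measure Ω) [IsProbabilityMeasure μ]
    (X : Fin n → Ω → ℝ) (p : Fin n → ℝ) (K : ℝ)
    (hK : 0 < K)
    (hp : ∀ i, 0 < p i ∧ p i ≤ 1)
    (hmeas : ∀ i, Measurable (X i))
    (hindep : iIndepFun X μ)
    (hcent : ∀ i, ∫ ω, X i ω ∂μ = 0)
    (hmom : ∀ i, ∀ r : ℝ, 1 ≤ r →
      Integrable (fun ω => |X i ω| ^ r) μ ∧
      ∫ ω, |X i ω| ^ r ∂μ ≤ p i * (K * r ^ (1 / α)) ^ r)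
    (a : Fin n → ℝ)
    (r : ℕ) (hr : Even r) (hr2 : 2 ≤ r) :
    (∫ ω, |∑ i, a i * X i ω| ^ (r : ℝ) ∂μ) ^ ((r : ℝ)⁻¹) ≤
      ((8 : ℝ) ^ max (1 : ℝ) (1 / α) * Real.exp 2) * K *
        max ((r : ℝ) ^ max (1 : ℝ) (1 / α) * (⨆ i, |a i|))
          (Real.sqrt r * Real.sqrt (∑ i, (a i) ^ 2 * p i)) := by
  classical
  have hβ1 : (1:ℝ) ≤ max (1:ℝ) (1/α) := le_max_left _ _
  have hαβ : 1/α ≤ max (1:ℝ) (1/α) := le_max_right _ _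
  set β : ℝ := max (1:ℝ) (1/α) with hβdef
  have hr0 : (0:ℝ) < r := by positivity
  have hrr : (0:ℝ) < (r:ℝ) := hr0
  by_cases ha0 : ∀ i, a i = 0
  · have hS0 : (fun ω => |∑ i, a i * X i ω| ^ (r:ℝ)) = fun _ => (0:ℝ) := by
      funext ω
      simp only [ha0, zero_mul, Finset.sum_const_zero, abs_zero]
      exact Real.zero_rpow (by positivity)
    rw [hS0, integral_zero, Real.zero_rpow (by positivity)]
    have h1 : (0:ℝ) ≤ Real.sqrt r * Real.sqrt (∑ i, (a i)^2 * p i) := by positivity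
    have h2 : (0:ℝ) ≤ max ((r : ℝ) ^ β * (⨆ i, |a i|))
        (Real.sqrt r * Real.sqrt (∑ i, (a i) ^ 2 * p i)) := le_trans h1 (le_max_right _ _)
    positivity
  push_neg at ha0
  obtain ⟨i₀, hi₀⟩ := ha0
  set A : ℝ := ⨆ i, |a i| with hAdef
  have hbdd : BddAbove (Set.range fun i => |a i|) := Set.Finite.bddAbove (Set.finite_range _)
  have hAle : ∀ i, |a i| ≤ A := fun i => le_ciSup hbdd i
  have hApos : 0 < A := lt_of_lt_of_le (abs_pos.mpr hi₀) (hAle i₀)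
  set V : ℝ := ∑ i, a i ^ 2 * p i with hVdef
  have hVpos : 0 < V := by
    refine Finset.sum_pos' (fun i _ => by have := (hp i).1; positivity) ?_
    exact ⟨i₀, Finset.mem_univ _, by have := (hp i₀).1; positivity⟩
  set M : ℝ := max ((r:ℝ)^β * A) (Real.sqrt r * Real.sqrt V) with hMdef
  have hMpos : 0 < M := lt_of_lt_of_le (by positivity) (le_max_right _ _)
  have hMA : (r:ℝ)^β * A ≤ M := le_max_left _ _
  have hM2 : (r:ℝ) * V ≤ M^2 := by
    have h := le_max_right ((r:ℝ)^β * A) (Real.sqrt r * Real.sqrt V)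
    calc (r:ℝ) * V = (Real.sqrt r * Real.sqrt V)^2 := by
          rw [mul_pow, Real.sq_sqrt hr0.le, Real.sq_sqrt hVpos.le]
    _ ≤ M^2 := pow_le_pow_left₀ (by positivity) h 2
  have h8β : (0:ℝ) < (8:ℝ)^β := Real.rpow_pos_of_pos (by norm_num) β
  set t : ℝ := r / ((8:ℝ)^β * K * M) with htdef
  have htpos : 0 < t := by positivity
  have htK : t * K = r / ((8:ℝ)^β * M) := by
    rw [htdef]; field_simp
  -- the random variables
  set Y : Fin n → Ω → ℝ := fun i ω => a i * X i ω with hYdef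
  set S : Finset (Fin n) → Ω → ℝ := fun s ω => ∑ i ∈ s, Y i ω with hSdef
  set φ : Fin n → ℝ := fun i =>
    ∑ j ∈ Finset.Icc 2 r, p i * (t * |a i| * K)^j * ((j:ℝ)^(1/α))^j * 2^j / (j.factorial : ℝ)
    with hφdef
  have hφ0 : ∀ i, 0 ≤ φ i := by
    intro i
    apply Finset.sum_nonneg
    intro j _
    have := (hp i).1
    positivity
  set Pr : Finset (Fin n) → ℝ := fun s => ∏ i ∈ s, (1 + φ i) with hPrdef
  have hPr1 : ∀ s, 1 ≤ Pr s := by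
    intro s
    simp only [hPrdef]
    calc (1:ℝ) = ∏ _i ∈ s, (1:ℝ) := by simp
    _ ≤ ∏ i ∈ s, (1 + φ i) :=
      Finset.prod_le_prod (fun i _ => zero_le_one) (fun i _ => by linarith [hφ0 i])
  have hPr0 : ∀ s, 0 < Pr s := fun s => lt_of_lt_of_le one_pos (hPr1 s)
  have hYmeas : ∀ i, Measurable (Y i) := fun i => (hmeas i).const_mul (a i)
  have hSmeas : ∀ s, Measurable (S s) := fun s => Finset.measurable_sum s (fun i _ => hYmeas i)
  have hYindep : iIndepFun Y μ :=
    hindep.comp (fun i (x:ℝ) => a i * x) (fun i => measurable_const_mul (a i))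
  have hSY : ∀ s, S s = ∑ i ∈ s, Y i := by
    intro s; funext ω; simp only [hSdef, Finset.sum_apply]
  have hIndepSY : ∀ (s : Finset (Fin n)) (i : Fin n), i ∉ s → IndepFun (S s) (Y i) μ := by
    intro s i hi; rw [hSY s]
    exact hYindep.indepFun_finsetSum_of_notMem hYmeas hi
  have hIndepPow : ∀ (s : Finset (Fin n)) (i : Fin n), i ∉ s → ∀ (m k : ℕ),
      IndepFun (fun ω => S s ω ^ m) (fun ω => Y i ω ^ k) μ := by
    intro s i hi m k
    exact (hIndepSY s i hi).comp (measurable_id.pow_const m) (measurable_id.pow_const k)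
  have hXint : ∀ i (m : ℕ), Integrable (fun ω => X i ω ^ m) μ := by
    intro i m
    rcases Nat.eq_zero_or_pos m with hm | hm
    · subst hm; simpa using integrable_const (1:ℝ)
    · have h1 : (1:ℝ) ≤ (m:ℝ) := by exact_mod_cast hm
      refine ((hmom i m h1).1).mono' ((hmeas i).pow_const m).aestronglyMeasurable ?_
      filter_upwards with ω
      rw [Real.norm_eq_abs, abs_pow, ← Real.rpow_natCast |X i ω| m]
  have hYint : ∀ i (m:ℕ), Integrable (fun ω => Y i ω ^ m) μ := by
    intro i m
    have h : (fun ω => Y i ω ^ m) = fun ω => a i ^ m * X i ω ^ m := by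
      funext ω; simp only [hYdef]; rw [mul_pow]
    rw [h]; exact (hXint i m).const_mul _
  have hSint : ∀ (s : Finset (Fin n)) (m : ℕ), Integrable (fun ω => S s ω ^ m) μ := by
    intro s
    induction s using Finset.induction_on with
    | empty =>
      intro m
      have h : (fun ω => S ∅ ω ^ m) = fun _ => (0:ℝ)^m := by
        funext ω; simp only [hSdef, Finset.sum_empty]
      rw [h]; exact integrable_const _
    | insert i s hi ih =>
      intro m
      have h : (fun ω => S (insert i s) ω ^ m)
          = fun ω => ∑ k ∈ Finset.range (m+1), Y i ω ^ k * S s ω ^ (m - k) * (m.choose k : ℝ) := by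
        funext ω
        simp only [hSdef]
        rw [Finset.sum_insert hi, add_pow]
      rw [h]
      apply integrable_finset_sum
      intro k _
      exact ((hIndepPow s i hi (m-k) k).symm.integrable_mul (hYint i k) (ih (m-k))).mul_const _
  have hAbsInt : ∀ s (m : ℕ), Integrable (fun ω => |S s ω| ^ m) μ := by
    intro s m
    refine ((hSint s m).abs).congr ?_
    filter_upwards with ω
    exact abs_pow _ _
  have hEY0 : ∀ i, ∫ ω, Y i ω ^ 0 ∂μ = 1 := by intro i; simp
  have hEY1 : ∀ i, ∫ ω, Y i ω ^ 1 ∂μ = 0 := by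
    intro i
    simp only [pow_one, hYdef]
    rw [integral_const_mul, hcent i, mul_zero]
  have hEYk : ∀ i (k : ℕ), 2 ≤ k →
      |∫ ω, Y i ω ^ k ∂μ| ≤ |a i| ^ k * (p i * (K * (k:ℝ)^(1/α)) ^ k) := by
    intro i k hk
    have hk1 : (1:ℝ) ≤ (k:ℝ) := by exact_mod_cast le_trans one_le_two hk
    have h1 : ∫ ω, Y i ω ^ k ∂μ = a i ^ k * ∫ ω, X i ω ^ k ∂μ := by
      have h : (fun ω => Y i ω ^ k) = fun ω => a i ^ k * X i ω ^ k := by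
        funext ω; simp only [hYdef]; rw [mul_pow]
      rw [h, integral_const_mul]
    rw [h1, abs_mul, abs_pow]
    have h2 : |∫ ω, X i ω ^ k ∂μ| ≤ ∫ ω, |X i ω| ^ (k:ℝ) ∂μ := by
      calc |∫ ω, X i ω ^ k ∂μ| ≤ ∫ ω, |X i ω ^ k| ∂μ := by
            simpa [Real.norm_eq_abs] using
              norm_integral_le_integral_norm (μ := μ) (fun ω => X i ω ^ k)
      _ = ∫ ω, |X i ω| ^ (k:ℝ) ∂μ := by
            congr 1; funext ω; rw [abs_pow, Real.rpow_natCast]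
    have h3 := (hmom i k hk1).2
    have h4 : (K * (k:ℝ)^(1/α)) ^ ((k:ℝ)) = (K * (k:ℝ)^(1/α)) ^ k := by
      rw [Real.rpow_natCast]
    have h5 : |∫ ω, X i ω ^ k ∂μ| ≤ p i * (K * (k:ℝ)^(1/α)) ^ k := by
      rw [← h4]; exact le_trans h2 h3
    exact mul_le_mul_of_nonneg_left h5 (by positivity)
  have hprod : ∀ (s : Finset (Fin n)) i, i ∉ s → ∀ (m k : ℕ),
      ∫ ω, Y i ω ^ k * S s ω ^ m ∂μ = (∫ ω, Y i ω ^ k ∂μ) * (∫ ω, S s ω ^ m ∂μ) := by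
    intro s i hi m k
    exact ((hIndepPow s i hi m k).symm).integral_fun_mul_eq_mul_integral
      ((hYmeas i).pow_const k).aestronglyMeasurable ((hSmeas s).pow_const m).aestronglyMeasurable
  have hexpand : ∀ (s : Finset (Fin n)) i, i ∉ s → ∀ q : ℕ,
      ∫ ω, S (insert i s) ω ^ q ∂μ
        = ∑ k ∈ Finset.range (q+1),
            (∫ ω, Y i ω ^ k ∂μ) * (∫ ω, S s ω ^ (q - k) ∂μ) * (q.choose k : ℝ) := by
    intro s i hi q
    have h1 : (fun ω => S (insert i s) ω ^ q)
        = fun ω => ∑ k ∈ Finset.range (q+1), Y i ω ^ k * S s ω ^ (q-k) * (q.choose k : ℝ) := by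
      funext ω
      simp only [hSdef]
      rw [Finset.sum_insert hi, add_pow]
    rw [h1, integral_finset_sum]
    · refine Finset.sum_congr rfl fun k _ => ?_
      rw [integral_mul_const, hprod s i hi (q-k) k]
    · intro k _
      exact ((hIndepPow s i hi (q-k) k).symm.integrable_mul (hYint i k) (hSint s (q-k))).mul_const _
  have hterm : ∀ q k : ℕ, 2 ≤ k → k ≤ q →
      (q.choose k : ℝ) * 2 * ((q - k : ℕ):ℝ) ^ (q - k) ≤ (q:ℝ)^q * 2^k / (k.factorial : ℝ) := by
    intro q k hk2 hkq
    have hkf : (0:ℝ) < (k.factorial : ℝ) := by exact_mod_cast k.factorial_pos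
    have h1 : (q.choose k : ℝ) ≤ (q:ℝ)^k / (k.factorial : ℝ) := Nat.choose_le_pow_div k q
    have h2 : ((q-k:ℕ):ℝ)^(q-k) ≤ (q:ℝ)^(q-k) := by
      apply pow_le_pow_left₀ (by positivity)
      exact_mod_cast Nat.sub_le q k
    have h3 : (2:ℝ) ≤ 2^k := by
      calc (2:ℝ) = 2^1 := (pow_one 2).symm
      _ ≤ 2^k := pow_le_pow_right₀ one_le_two (by omega)
    have h4 : (q:ℝ)^k * (q:ℝ)^(q-k) = (q:ℝ)^q := by
      rw [← pow_add]; congr 1; omega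
    calc (q.choose k:ℝ) * 2 * ((q-k:ℕ):ℝ)^(q-k)
        ≤ ((q:ℝ)^k/(k.factorial:ℝ)) * 2^k * (q:ℝ)^(q-k) :=
          mul_le_mul (mul_le_mul h1 h3 (by norm_num) (by positivity)) h2 (by positivity)
            (by positivity)
    _ = (q:ℝ)^q * 2^k / (k.factorial:ℝ) := by
        rw [← h4]; field_simp
  -- odd moment bound from even moment bounds
  have habs : ∀ (s : Finset (Fin n)),
      (∀ q : ℕ, q ≤ r → Even q → ∫ ω, S s ω ^ q ∂μ ≤ (q:ℝ)^q * t⁻¹^q * Pr s) →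
      ∀ m : ℕ, m ≤ r → ∫ ω, |S s ω| ^ m ∂μ ≤ 2 * ((m:ℝ)^m * t⁻¹^m * Pr s) := by
    intro s hP m hm
    rcases Nat.even_or_odd m with hme | hmo
    · have h1 : (fun ω => |S s ω| ^ m) = fun ω => S s ω ^ m := by
        funext ω; exact hme.pow_abs _
      rw [h1]
      have h2 := hP m hm hme
      have h3 : (0:ℝ) ≤ (m:ℝ)^m * t⁻¹^m * Pr s := by
        apply mul_nonneg (by positivity) (hPr0 s).le
      linarith
    · obtain ⟨l, hl⟩ := hmo
      subst hl
      have hm1 : 2*l + 2 ≤ r := by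
        obtain ⟨c, hc⟩ := hr; omega
      have hD : (0:ℝ) < ((2*l : ℕ):ℝ)^l := by
        rcases Nat.eq_zero_or_pos l with h | h
        · subst h; norm_num
        · have h2 : (0:ℝ) < ((2*l:ℕ):ℝ) := by positivity
          positivity
      set D : ℝ := ((2*l : ℕ):ℝ)^l with hDdef
      have hE : (0:ℝ) < ((2*l+2 : ℕ):ℝ)^(l+1) := by positivity
      set E : ℝ := ((2*l+2 : ℕ):ℝ)^(l+1) with hEdef
      have hu : 0 < E / D * t⁻¹ := by positivity
      have hpt : ∀ x : ℝ, |x| ^ (2*l+1)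
          ≤ ((E/D*t⁻¹) * x^(2*l) + (E/D*t⁻¹)⁻¹ * x^(2*l+2)) / 2 := by
        intro x
        have h1 : x^(2*l) = |x|^(2*l) := ((even_two_mul l).pow_abs x).symm
        have h2 : x^(2*l+2) = |x|^(2*l+2) := by
          have he : Even (2*l+2) := ⟨l+1, by ring⟩
          exact (he.pow_abs x).symm
        rw [h1, h2]
        exact aux_amgm _ hu x l
      have hint1 : Integrable (fun ω => ((E/D*t⁻¹) * S s ω^(2*l)
          + (E/D*t⁻¹)⁻¹ * S s ω^(2*l+2))/2) μ :=
        (((hSint s (2*l)).const_mul _).add ((hSint s (2*l+2)).const_mul _)).div_const 2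
      have hIle : ∫ ω, |S s ω|^(2*l+1) ∂μ
          ≤ ((E/D*t⁻¹) * ∫ ω, S s ω^(2*l) ∂μ + (E/D*t⁻¹)⁻¹ * ∫ ω, S s ω^(2*l+2) ∂μ)/2 := by
        calc ∫ ω, |S s ω|^(2*l+1) ∂μ
            ≤ ∫ ω, ((E/D*t⁻¹) * S s ω^(2*l) + (E/D*t⁻¹)⁻¹ * S s ω^(2*l+2))/2 ∂μ :=
              integral_mono (hAbsInt s _) hint1 (fun ω => hpt _)
        _ = ((E/D*t⁻¹) * ∫ ω, S s ω^(2*l) ∂μ + (E/D*t⁻¹)⁻¹ * ∫ ω, S s ω^(2*l+2) ∂μ)/2 := by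
            rw [integral_div, integral_add ((hSint s (2*l)).const_mul _)
              ((hSint s (2*l+2)).const_mul _), integral_const_mul, integral_const_mul]
      have hP1 : ∫ ω, S s ω^(2*l) ∂μ ≤ D * D * t⁻¹^(2*l) * Pr s := by
        have h := hP (2*l) (by omega) (even_two_mul l)
        have p1 : ((2*l:ℕ):ℝ)^(2*l) = D * D := by
          rw [hDdef, ← pow_add]; congr 1; ring
        rw [p1] at h
        linarith
      have hP2 : ∫ ω, S s ω^(2*l+2) ∂μ ≤ E * E * t⁻¹^(2*l+2) * Pr s := by
        have h := hP (2*l+2) hm1 ⟨l+1, by ring⟩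
        have p2 : ((2*l+2:ℕ):ℝ)^(2*l+2) = E * E := by
          rw [hEdef, ← pow_add]; congr 1; ring
        rw [p2] at h
        linarith
      have hstep := aux_odd_step t⁻¹ D E (Pr s) _ _ (by positivity) hD hE (hPr0 s).le l hP1 hP2
      have hnum : D * E ≤ 2 * ((2*l+1:ℕ):ℝ)^(2*l+1) := by
        rw [hDdef, hEdef]; exact aux_odd_numeric l
      calc ∫ ω, |S s ω|^(2*l+1) ∂μ
          ≤ D * E * t⁻¹^(2*l+1) * Pr s := le_trans hIle hstep
      _ ≤ 2 * ((2*l+1:ℕ):ℝ)^(2*l+1) * t⁻¹^(2*l+1) * Pr s :=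
          mul_le_mul_of_nonneg_right (mul_le_mul_of_nonneg_right hnum (by positivity))
            (hPr0 s).le
      _ = 2 * (((2*l+1:ℕ):ℝ)^(2*l+1) * t⁻¹^(2*l+1) * Pr s) := by ring
  have main : ∀ (s : Finset (Fin n)), ∀ q : ℕ, q ≤ r → Even q →
      ∫ ω, S s ω ^ q ∂μ ≤ (q:ℝ)^q * t⁻¹^q * Pr s := by
    intro s
    induction s using Finset.induction_on with
    | empty =>
      intro q hq hqe
      have h : (fun ω => S ∅ ω ^ q) = fun _ => (0:ℝ)^q := by
        funext ω; simp only [hSdef, Finset.sum_empty]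
      rw [h, integral_const]
      simp only [measure_univ, probReal_univ, ENNReal.toReal_one, one_smul]
      rcases Nat.eq_zero_or_pos q with h0 | h0
      · subst h0
        simp only [pow_zero, Nat.cast_zero, one_mul]
        exact hPr1 ∅
      · rw [zero_pow (by omega : q ≠ 0)]
        exact mul_nonneg (by positivity) (hPr0 ∅).le
    | insert i s hi ih =>
      intro q hq hqe
      rcases Nat.eq_zero_or_pos q with h0 | h0
      · subst h0
        have h : (fun ω => S (insert i s) ω ^ 0) = fun _ => (1:ℝ) := by
          funext ω; simp
        rw [h, integral_const]
        simp only [measure_univ, probReal_univ, ENNReal.toReal_one, one_smul, pow_zero, Nat.cast_zero, one_mul]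
        exact hPr1 _
      have hq2 : 2 ≤ q := by obtain ⟨c, hc⟩ := hqe; omega
      rw [hexpand s i hi q]
      have hsplit : Finset.range (q+1) = insert 0 (insert 1 (Finset.Icc 2 q)) := by
        ext k; simp only [Finset.mem_range, Finset.mem_insert, Finset.mem_Icc]; omega
      rw [hsplit, Finset.sum_insert (by simp only [Finset.mem_insert, Finset.mem_Icc]; omega),
        Finset.sum_insert (by simp only [Finset.mem_Icc]; omega)]
      rw [hEY0 i, hEY1 i]
      simp only [Nat.choose_zero_right, Nat.cast_one, one_mul, mul_one, zero_mul, Nat.sub_zero]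
      have hB0 : ∫ ω, S s ω ^ q ∂μ ≤ (q:ℝ)^q * t⁻¹^q * Pr s := ih q hq hqe
      have hAbsBound : ∀ m' : ℕ, m' ≤ r →
          |∫ ω, S s ω ^ m' ∂μ| ≤ 2 * ((m':ℝ)^m' * t⁻¹^m' * Pr s) := by
        intro m' hm'
        calc |∫ ω, S s ω ^ m' ∂μ| ≤ ∫ ω, |S s ω| ^ m' ∂μ := by
              have h := norm_integral_le_integral_norm (μ := μ) (fun ω => S s ω ^ m')
              simpa [Real.norm_eq_abs, abs_pow] using h
        _ ≤ 2 * ((m':ℝ)^m' * t⁻¹^m' * Pr s) := habs s ih m' hm'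
      have hBk : ∀ k ∈ Finset.Icc 2 q,
          (∫ ω, Y i ω ^ k ∂μ) * (∫ ω, S s ω ^ (q - k) ∂μ) * (q.choose k : ℝ)
            ≤ ((q:ℝ)^q * t⁻¹^q * Pr s) *
              (p i * (t * |a i| * K)^k * ((k:ℝ)^(1/α))^k * 2^k / (k.factorial : ℝ)) := by
        intro k hk
        rw [Finset.mem_Icc] at hk
        obtain ⟨hk2, hkq⟩ := hk
        have hkr : q - k ≤ r := by omega
        have hc0 : (0:ℝ) ≤ (q.choose k : ℝ) := by positivity
        have step1 : (∫ ω, Y i ω ^ k ∂μ) * (∫ ω, S s ω ^ (q - k) ∂μ) * (q.choose k : ℝ)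
            ≤ (|a i| ^ k * (p i * (K * (k:ℝ)^(1/α)) ^ k)) *
              (2 * (((q-k:ℕ)):ℝ)^(q-k) * t⁻¹^(q-k) * Pr s) * (q.choose k : ℝ) := by
          calc (∫ ω, Y i ω ^ k ∂μ) * (∫ ω, S s ω ^ (q - k) ∂μ) * (q.choose k : ℝ)
              ≤ |(∫ ω, Y i ω ^ k ∂μ) * (∫ ω, S s ω ^ (q - k) ∂μ) * (q.choose k : ℝ)| :=
                le_abs_self _
          _ = |∫ ω, Y i ω ^ k ∂μ| * |∫ ω, S s ω ^ (q - k) ∂μ| * (q.choose k : ℝ) := by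
              rw [abs_mul, abs_mul, Nat.abs_cast]
          _ ≤ (|a i| ^ k * (p i * (K * (k:ℝ)^(1/α)) ^ k)) *
              (2 * (((q-k:ℕ)):ℝ)^(q-k) * t⁻¹^(q-k) * Pr s) * (q.choose k : ℝ) := by
              apply mul_le_mul_of_nonneg_right ?_ hc0
              apply mul_le_mul (hEYk i k hk2) ?_ (abs_nonneg _) ?_
              · have h := hAbsBound (q-k) hkr
                calc |∫ ω, S s ω ^ (q - k) ∂μ| ≤ 2 * ((((q-k:ℕ)):ℝ)^(q-k) * t⁻¹^(q-k) * Pr s) :=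
                      h
                _ = 2 * (((q-k:ℕ)):ℝ)^(q-k) * t⁻¹^(q-k) * Pr s := by ring
              · have hpn := (hp i).1
                positivity
        have step2 : (|a i| ^ k * (p i * (K * (k:ℝ)^(1/α)) ^ k)) *
              (2 * (((q-k:ℕ)):ℝ)^(q-k) * t⁻¹^(q-k) * Pr s) * (q.choose k : ℝ)
            ≤ ((q:ℝ)^q * t⁻¹^q * Pr s) *
              (p i * (t * |a i| * K)^k * ((k:ℝ)^(1/α))^k * 2^k / (k.factorial : ℝ)) := by
          have htk : t⁻¹^(q-k) = t⁻¹^q * t^k := by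
            have hqk : t⁻¹^q = t⁻¹^(q-k) * t⁻¹^k := by rw [← pow_add]; congr 1; omega
            rw [hqk, mul_assoc, ← mul_pow, inv_mul_cancel₀ htpos.ne', one_pow, mul_one]
          have hterm' := hterm q k hk2 hkq
          have hnn : (0:ℝ) ≤ p i * K^k * ((k:ℝ)^(1/α))^k * t⁻¹^q * t^k * |a i|^k * Pr s := by
            apply mul_nonneg ?_ (hPr0 s).le
            have hpn := (hp i).1
            positivity
          calc (|a i| ^ k * (p i * (K * (k:ℝ)^(1/α)) ^ k)) *
              (2 * (((q-k:ℕ)):ℝ)^(q-k) * t⁻¹^(q-k) * Pr s) * (q.choose k : ℝ)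
              = (p i * K^k * ((k:ℝ)^(1/α))^k * t⁻¹^q * t^k * |a i|^k * Pr s) *
                ((q.choose k : ℝ) * 2 * (((q-k:ℕ)):ℝ)^(q-k)) := by
                rw [htk, mul_pow]; ring
          _ ≤ (p i * K^k * ((k:ℝ)^(1/α))^k * t⁻¹^q * t^k * |a i|^k * Pr s) *
                ((q:ℝ)^q * 2^k / (k.factorial : ℝ)) :=
              mul_le_mul_of_nonneg_left hterm' hnn
          _ = ((q:ℝ)^q * t⁻¹^q * Pr s) *
              (p i * (t * |a i| * K)^k * ((k:ℝ)^(1/α))^k * 2^k / (k.factorial : ℝ)) := by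
              rw [mul_pow, mul_pow]; ring
        exact le_trans step1 step2
      have hsum : ∑ k ∈ Finset.Icc 2 q,
          (∫ ω, Y i ω ^ k ∂μ) * (∫ ω, S s ω ^ (q - k) ∂μ) * (q.choose k : ℝ)
            ≤ ((q:ℝ)^q * t⁻¹^q * Pr s) * φ i := by
        calc ∑ k ∈ Finset.Icc 2 q,
            (∫ ω, Y i ω ^ k ∂μ) * (∫ ω, S s ω ^ (q - k) ∂μ) * (q.choose k : ℝ)
            ≤ ∑ k ∈ Finset.Icc 2 q, ((q:ℝ)^q * t⁻¹^q * Pr s) *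
              (p i * (t * |a i| * K)^k * ((k:ℝ)^(1/α))^k * 2^k / (k.factorial : ℝ)) :=
              Finset.sum_le_sum hBk
        _ = ((q:ℝ)^q * t⁻¹^q * Pr s) * ∑ k ∈ Finset.Icc 2 q,
              (p i * (t * |a i| * K)^k * ((k:ℝ)^(1/α))^k * 2^k / (k.factorial : ℝ)) := by
            rw [Finset.mul_sum]
        _ ≤ ((q:ℝ)^q * t⁻¹^q * Pr s) * φ i := by
            apply mul_le_mul_of_nonneg_left ?_
              (mul_nonneg (by positivity) (hPr0 s).le)
            simp only [hφdef]
            apply Finset.sum_le_sum_of_subset_of_nonneg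
            · exact Finset.Icc_subset_Icc_right hq
            · intro j _ _
              have hpn := (hp i).1
              positivity
      have hPrins : Pr (insert i s) = (1 + φ i) * Pr s := by
        simp only [hPrdef]
        rw [Finset.prod_insert hi]
      calc ∫ ω, S s ω ^ q ∂μ + (0 + ∑ k ∈ Finset.Icc 2 q,
          (∫ ω, Y i ω ^ k ∂μ) * (∫ ω, S s ω ^ (q - k) ∂μ) * (q.choose k : ℝ))
          ≤ (q:ℝ)^q * t⁻¹^q * Pr s + (0 + ((q:ℝ)^q * t⁻¹^q * Pr s) * φ i) :=
            add_le_add hB0 (add_le_add le_rfl hsum)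
      _ = (q:ℝ)^q * t⁻¹^q * ((1 + φ i) * Pr s) := by ring
      _ = (q:ℝ)^q * t⁻¹^q * Pr (insert i s) := by rw [hPrins]
  have hstepC : ∀ j:ℕ, 2 ≤ j → j ≤ r →
      ((t*K)^j * (((j:ℝ)^(1/α))^j * 2^j / (j.factorial:ℝ))) * (A^(j-2) * V)
        ≤ (r:ℝ) * (Real.exp 1 / 4)^j := by
    intro j hj2 hjr
    have hjr' : (j:ℝ) ≤ (r:ℝ) := by exact_mod_cast hjr
    have hj1 : (1:ℝ) ≤ (j:ℝ) := by exact_mod_cast (by omega : 1 ≤ j)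
    have hj0 : (0:ℝ) ≤ (j:ℝ) := by positivity
    have hfj : (0:ℝ) < (j.factorial:ℝ) := by exact_mod_cast j.factorial_pos
    have hQ : (0:ℝ) < (r:ℝ)^β := Real.rpow_pos_of_pos hr0 β
    have h8nn : (0:ℝ) ≤ (8:ℝ) := by norm_num
    have hMj : (((r:ℝ)^β)^(j-2) * A^(j-2)) * ((r:ℝ) * V) ≤ M^j := by
      have h1 : M^j = M^(j-2) * M^2 := by rw [← pow_add]; congr 1; omega
      have h2 : ((r:ℝ)^β)^(j-2) * A^(j-2) = ((r:ℝ)^β * A)^(j-2) := (mul_pow _ _ _).symm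
      rw [h1, h2]
      exact mul_le_mul (pow_le_pow_left₀ (mul_nonneg (Real.rpow_nonneg hr0.le β) hApos.le) hMA _)
        hM2 (mul_nonneg hr0.le hVpos.le) (pow_nonneg hMpos.le _)
    have hc3 : (t*K)^j * (A^(j-2) * V) ≤ (r:ℝ)^(j-1) / (((8:ℝ)^β)^j * ((r:ℝ)^β)^(j-2)) := by
      rw [htK, div_pow, mul_pow, div_mul_eq_mul_div]
      rw [div_le_div_iff₀ (mul_pos (pow_pos h8β j) (pow_pos hMpos j))
        (mul_pos (pow_pos h8β j) (pow_pos hQ (j-2)))]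
      calc (r:ℝ)^j * (A^(j-2)*V) * (((8:ℝ)^β)^j * ((r:ℝ)^β)^(j-2))
          = ((8:ℝ)^β)^j * ((r:ℝ)^(j-1)) * ((((r:ℝ)^β)^(j-2) * A^(j-2)) * ((r:ℝ)*V)) := by
            have hrj : (r:ℝ)^j = (r:ℝ)^(j-1) * (r:ℝ) := by rw [← pow_succ]; congr 1; omega
            rw [hrj]; ring
      _ ≤ ((8:ℝ)^β)^j * ((r:ℝ)^(j-1)) * M^j :=
          mul_le_mul_of_nonneg_left hMj (by positivity)
      _ = (r:ℝ)^(j-1) * (((8:ℝ)^β)^j * M^j) := by ring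
    have hx0 : (0:ℝ) < (j:ℝ)^j / ((8:ℝ)^j * (r:ℝ)^(j-2)) := by positivity
    have hx1 : (j:ℝ)^j / ((8:ℝ)^j * (r:ℝ)^(j-2)) ≤ 1 := by
      rw [div_le_one (by positivity)]
      have ha : (j:ℝ)^j = (j:ℝ)^2 * (j:ℝ)^(j-2) := by rw [← pow_add]; congr 1; omega
      have hj2p : (j:ℝ) ≤ 2^j := by
        have h := (Nat.lt_two_pow_self (n := j)).le
        exact_mod_cast h
      have hb : (j:ℝ)^2 ≤ (8:ℝ)^j := by
        calc (j:ℝ)^2 ≤ ((2:ℝ)^j)^2 := pow_le_pow_left₀ hj0 hj2p 2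
        _ = (4:ℝ)^j := by rw [← pow_mul, mul_comm, pow_mul]; norm_num
        _ ≤ (8:ℝ)^j := pow_le_pow_left₀ (by norm_num) (by norm_num) j
      have hc : (j:ℝ)^(j-2) ≤ (r:ℝ)^(j-2) := pow_le_pow_left₀ hj0 hjr' _
      calc (j:ℝ)^j = (j:ℝ)^2 * (j:ℝ)^(j-2) := ha
      _ ≤ (8:ℝ)^j * (r:ℝ)^(j-2) := mul_le_mul hb hc (by positivity) (by positivity)
    have hrpow : ((j:ℝ)^(1/α))^j / (((8:ℝ)^β)^j * ((r:ℝ)^β)^(j-2))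
        ≤ (j:ℝ)^j / ((8:ℝ)^j * (r:ℝ)^(j-2)) := by
      have e1 : ((j:ℝ)^(1/α))^j = (j:ℝ)^((1/α)*(j:ℝ)) := by
        rw [← Real.rpow_natCast ((j:ℝ)^(1/α)) j, ← Real.rpow_mul hj0]
      have e2 : (j:ℝ)^(β*(j:ℝ)) = ((j:ℝ)^j:ℝ)^β := by
        rw [mul_comm β ((j:ℝ)), Real.rpow_mul hj0, Real.rpow_natCast]
      have e3 : ((8:ℝ)^β)^j = ((8:ℝ)^j:ℝ)^β := by
        rw [← Real.rpow_natCast ((8:ℝ)^β) j, ← Real.rpow_mul h8nn, mul_comm β ((j:ℕ):ℝ),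
          Real.rpow_mul h8nn, Real.rpow_natCast]
      have e4 : ((r:ℝ)^β)^(j-2) = ((r:ℝ)^(j-2):ℝ)^β := by
        rw [← Real.rpow_natCast ((r:ℝ)^β) (j-2), ← Real.rpow_mul hr0.le,
          mul_comm β (((j-2:ℕ)):ℝ), Real.rpow_mul hr0.le, Real.rpow_natCast]
      have hbound : (j:ℝ)^((1/α)*(j:ℝ)) ≤ (j:ℝ)^(β*(j:ℝ)) :=
        Real.rpow_le_rpow_of_exponent_le hj1 (mul_le_mul_of_nonneg_right hαβ hj0)
      rw [e1, e3, e4]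
      calc (j:ℝ)^((1/α)*(j:ℝ)) / (((8:ℝ)^j:ℝ)^β * (((r:ℝ)^(j-2)):ℝ)^β)
          ≤ (j:ℝ)^(β*(j:ℝ)) / (((8:ℝ)^j:ℝ)^β * (((r:ℝ)^(j-2)):ℝ)^β) := by gcongr
      _ = ((j:ℝ)^j / ((8:ℝ)^j * (r:ℝ)^(j-2)))^β := by
          rw [e2, ← Real.mul_rpow (by positivity) (by positivity),
            ← Real.div_rpow (by positivity) (by positivity)]
      _ ≤ (j:ℝ)^j / ((8:ℝ)^j * (r:ℝ)^(j-2)) := by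
          have h := Real.rpow_le_rpow_of_exponent_ge hx0 hx1 hβ1
          simpa [Real.rpow_one] using h
    have hjj := aux_pow_le_factorial_mul_exp j
    calc ((t*K)^j * (((j:ℝ)^(1/α))^j * 2^j / (j.factorial:ℝ))) * (A^(j-2) * V)
        = ((t*K)^j * (A^(j-2)*V)) * (((j:ℝ)^(1/α))^j * 2^j / (j.factorial:ℝ)) := by ring
    _ ≤ ((r:ℝ)^(j-1) / (((8:ℝ)^β)^j * ((r:ℝ)^β)^(j-2))) *
          (((j:ℝ)^(1/α))^j * 2^j / (j.factorial:ℝ)) := by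
        apply mul_le_mul_of_nonneg_right hc3 (by positivity)
    _ = ((r:ℝ)^(j-1) * 2^j / (j.factorial:ℝ)) *
          (((j:ℝ)^(1/α))^j / (((8:ℝ)^β)^j * ((r:ℝ)^β)^(j-2))) := by ring
    _ ≤ ((r:ℝ)^(j-1) * 2^j / (j.factorial:ℝ)) * ((j:ℝ)^j / ((8:ℝ)^j * (r:ℝ)^(j-2))) := by
        apply mul_le_mul_of_nonneg_left hrpow (by positivity)
    _ ≤ (r:ℝ) * (Real.exp 1/4)^j := by
        have hrj : (r:ℝ)^(j-1) = (r:ℝ)^(j-2) * (r:ℝ) := by rw [← pow_succ]; congr 1; omega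
        have hfin : ((r:ℝ)^(j-1) * 2^j / (j.factorial:ℝ)) * ((j:ℝ)^j / ((8:ℝ)^j * (r:ℝ)^(j-2)))
            = (r:ℝ) * ((j:ℝ)^j / (j.factorial:ℝ)) * ((2:ℝ)^j/(8:ℝ)^j) := by
          rw [hrj]; field_simp
        rw [hfin]
        have h1 : (j:ℝ)^j / (j.factorial:ℝ) ≤ Real.exp 1 ^ j := by
          rw [div_le_iff₀ hfj]; linarith [hjj]
        have h2 : (2:ℝ)^j/(8:ℝ)^j = ((1:ℝ)/4)^j := by
          rw [← div_pow]; norm_num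
        calc (r:ℝ) * ((j:ℝ)^j / (j.factorial:ℝ)) * ((2:ℝ)^j/(8:ℝ)^j)
            ≤ (r:ℝ) * Real.exp 1 ^j * ((2:ℝ)^j/(8:ℝ)^j) := by
              apply mul_le_mul_of_nonneg_right (mul_le_mul_of_nonneg_left h1 hr0.le)
                (by positivity)
        _ = (r:ℝ) * (Real.exp 1/4)^j := by
            rw [h2, mul_assoc, ← mul_pow]
            congr 2
            ring
  have hgeom : ∑ j ∈ Finset.Icc 2 r, (Real.exp 1/4)^j ≤ 2 := by
    have hx0 : (0:ℝ) < Real.exp 1/4 := by positivity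
    have he : Real.exp 1 < 2.7182818286 := Real.exp_one_lt_d9
    have hx1 : Real.exp 1/4 < 1 := by nlinarith
    have h1x : (0:ℝ) < 1 - Real.exp 1/4 := by linarith
    have hS : ∑ j ∈ Finset.range (r+1), (Real.exp 1/4)^j ≤ 1/(1-Real.exp 1/4) := by
      have hgs := geom_sum_mul (Real.exp 1/4) (r+1)
      rw [le_div_iff₀ h1x]
      have hxp : (0:ℝ) ≤ (Real.exp 1/4)^(r+1) := by positivity
      nlinarith [hgs]
    have hsplit2 : Finset.range (r+1) = insert 0 (insert 1 (Finset.Icc 2 r)) := by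
      ext k; simp only [Finset.mem_range, Finset.mem_insert, Finset.mem_Icc]; omega
    have hsum2 : ∑ j ∈ Finset.range (r+1), (Real.exp 1/4)^j
        = 1 + Real.exp 1/4 + ∑ j ∈ Finset.Icc 2 r, (Real.exp 1/4)^j := by
      rw [hsplit2, Finset.sum_insert (by simp only [Finset.mem_insert, Finset.mem_Icc]; omega),
        Finset.sum_insert (by simp only [Finset.mem_Icc]; omega)]
      rw [pow_zero, pow_one]; ring
    have hfinal : 1/(1-Real.exp 1/4) ≤ 3 + Real.exp 1/4 := by
      rw [div_le_iff₀ h1x]; nlinarith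
    linarith [hS, hsum2.symm.le]
  have hφsum : ∑ i, φ i ≤ 2 * (r:ℝ) := by
    have hswap : ∑ i, φ i = ∑ j ∈ Finset.Icc 2 r, ∑ i,
        p i * (t * |a i| * K)^j * ((j:ℝ)^(1/α))^j * 2^j / (j.factorial:ℝ) := by
      simp only [hφdef]; rw [Finset.sum_comm]
    rw [hswap]
    have hcol : ∀ j ∈ Finset.Icc 2 r,
        (∑ i, p i * (t * |a i| * K)^j * ((j:ℝ)^(1/α))^j * 2^j / (j.factorial:ℝ))
          ≤ (r:ℝ) * (Real.exp 1 / 4)^j := by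
      intro j hj
      rw [Finset.mem_Icc] at hj
      obtain ⟨hj2, hjr⟩ := hj
      have hsummand : ∀ i', p i' * (t * |a i'| * K)^j * ((j:ℝ)^(1/α))^j * 2^j / (j.factorial:ℝ)
          = ((t*K)^j * (((j:ℝ)^(1/α))^j * 2^j / (j.factorial:ℝ))) * (p i' * |a i'|^j) := by
        intro i'; rw [mul_pow, mul_pow]; ring
      rw [Finset.sum_congr rfl (fun i' _ => hsummand i'), ← Finset.mul_sum]
      have hsum1 : ∑ i', p i' * |a i'|^j ≤ A^(j-2) * V := by
        rw [hVdef, Finset.mul_sum]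
        apply Finset.sum_le_sum
        intro i' _
        have h1 : |a i'|^j = |a i'|^(j-2) * |a i'|^2 := by rw [← pow_add]; congr 1; omega
        have h2 : |a i'|^2 = a i'^2 := sq_abs _
        have hpi := (hp i').1
        calc p i' * |a i'|^j = p i' * (|a i'|^(j-2) * a i'^2) := by rw [h1, h2]
        _ ≤ p i' * (A^(j-2) * a i'^2) := by
            apply mul_le_mul_of_nonneg_left ?_ hpi.le
            exact mul_le_mul_of_nonneg_right
              (pow_le_pow_left₀ (abs_nonneg _) (hAle i') _) (sq_nonneg _)
        _ = A^(j-2) * (a i'^2 * p i') := by ring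
      have hCnn : (0:ℝ) ≤ (t*K)^j * (((j:ℝ)^(1/α))^j * 2^j / (j.factorial:ℝ)) :=
        mul_nonneg (pow_nonneg (mul_nonneg htpos.le hK.le) j) (by positivity)
      calc ((t*K)^j * (((j:ℝ)^(1/α))^j * 2^j / (j.factorial:ℝ))) * (∑ i', p i' * |a i'|^j)
          ≤ ((t*K)^j * (((j:ℝ)^(1/α))^j * 2^j / (j.factorial:ℝ))) * (A^(j-2) * V) :=
            mul_le_mul_of_nonneg_left hsum1 hCnn
      _ ≤ (r:ℝ) * (Real.exp 1 / 4)^j := hstepC j hj2 hjr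
    calc ∑ j ∈ Finset.Icc 2 r, ∑ i,
        p i * (t * |a i| * K)^j * ((j:ℝ)^(1/α))^j * 2^j / (j.factorial:ℝ)
        ≤ ∑ j ∈ Finset.Icc 2 r, (r:ℝ) * (Real.exp 1/4)^j := Finset.sum_le_sum hcol
    _ = (r:ℝ) * ∑ j ∈ Finset.Icc 2 r, (Real.exp 1/4)^j := by rw [← Finset.mul_sum]
    _ ≤ (r:ℝ) * 2 := mul_le_mul_of_nonneg_left hgeom hr0.le
    _ = 2 * (r:ℝ) := by ring
  have hPrU : Pr Finset.univ ≤ Real.exp (2*(r:ℝ)) := by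
    simp only [hPrdef]
    calc ∏ i, (1 + φ i) ≤ ∏ i, Real.exp (φ i) := by
          apply Finset.prod_le_prod
          · intro i _
            linarith [hφ0 i]
          · intro i _
            linarith [Real.add_one_le_exp (φ i)]
    _ = Real.exp (∑ i, φ i) := (Real.exp_sum _ _).symm
    _ ≤ Real.exp (2*(r:ℝ)) := Real.exp_le_exp.mpr hφsum
  have hmainr := main Finset.univ r le_rfl hr
  have hexp2 : Real.exp (2*(r:ℝ)) = (Real.exp 2)^r := by rw [mul_comm, Real.exp_nat_mul]
  have hfin : ∫ ω, S Finset.univ ω ^ r ∂μ ≤ ((r:ℝ) * t⁻¹ * Real.exp 2)^r := by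
    calc ∫ ω, S Finset.univ ω ^ r ∂μ ≤ (r:ℝ)^r * t⁻¹^r * Pr Finset.univ := hmainr
    _ ≤ (r:ℝ)^r * t⁻¹^r * (Real.exp 2)^r := by
        rw [← hexp2]; exact mul_le_mul_of_nonneg_left hPrU (by positivity)
    _ = ((r:ℝ)*t⁻¹*Real.exp 2)^r := by rw [mul_pow, mul_pow]
  have hgoal_eq : (∫ ω, |∑ i, a i * X i ω| ^ (r:ℝ) ∂μ) = ∫ ω, S Finset.univ ω ^ r ∂μ := by
    apply integral_congr_ae
    filter_upwards with ω
    have h1 : ∑ i, a i * X i ω = S Finset.univ ω := by simp only [hSdef, hYdef]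
    rw [h1, Real.rpow_natCast]
    exact hr.pow_abs _
  rw [hgoal_eq]
  have hintnn : 0 ≤ ∫ ω, S Finset.univ ω ^ r ∂μ :=
    integral_nonneg fun ω => hr.pow_nonneg _
  have hy : (0:ℝ) ≤ (r:ℝ)*t⁻¹*Real.exp 2 := by positivity
  have hsimp : ((((r:ℝ)*t⁻¹*Real.exp 2)^r : ℝ))^((r:ℝ)⁻¹) = (r:ℝ)*t⁻¹*Real.exp 2 := by
    rw [← Real.rpow_natCast ((r:ℝ)*t⁻¹*Real.exp 2) r, ← Real.rpow_mul hy,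
      mul_inv_cancel₀ (ne_of_gt hr0), Real.rpow_one]
  have hval : (r:ℝ)*t⁻¹*Real.exp 2 = ((8:ℝ)^β * Real.exp 2) * K * M := by
    rw [htdef, inv_div]
    field_simp
  calc (∫ ω, S Finset.univ ω ^ r ∂μ)^((r:ℝ)⁻¹)
      ≤ ((((r:ℝ)*t⁻¹*Real.exp 2)^r : ℝ))^((r:ℝ)⁻¹) :=
        Real.rpow_le_rpow hintnn hfin (by positivity)
  _ = (r:ℝ)*t⁻¹*Real.exp 2 := hsimp
  _ = ((8:ℝ)^β * Real.exp 2) * K * M := hval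
end

section
/- Let L ≥ 1 and k ≥ 1 be positive integers, and let x_1, …, x_k be positive integers with x_i ≥ L for every i. Set S := x_1 + ⋯ + x_k (so S ≥ kL). Then ∏_{i=1}^k x_i^{x_i} ≤ L^{(k−1)L} · (S − (k−1)L)^{S − (k−1)L}. -/
open Finset

lemma real_two (L a b : ℝ) (hL : 0 < L) (ha : L ≤ a) (hb : L ≤ b) :
    a * Real.log a + b * Real.log b ≤
      L * Real.log L + (a + b - L) * Real.log (a + b - L) := by
  set M := a + b - L with hM
  have haM : a ≤ M := by simp [hM]; linarith
  have hbM : b ≤ M := by simp [hM]; linarith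
  rcases eq_or_lt_of_le (le_trans ha haM : L ≤ M) with h | h
  · have ha' : a = L := le_antisymm (by linarith) ha
    have hb' : b = L := le_antisymm (by linarith) hb
    rw [ha', hb', ← h]
  · set t : ℝ := (M - a) / (M - L) with ht
    have hML : (0:ℝ) < M - L := by linarith
    have ht0 : 0 ≤ t := div_nonneg (by linarith) hML.le
    have ht1 : t ≤ 1 := by rw [div_le_one hML]; linarith
    have hta : t * L + (1 - t) * M = a := by
      field_simp [ht]
      have e : t * (M - L) = M - a := by rw [ht]; exact div_mul_cancel₀ _ hML.ne'
      linarith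
    have htb : (1 - t) * L + t * M = b := by
      have h' : (1 - t) * L + t * M = L + M - (t * L + (1 - t) * M) := by ring
      rw [h', hta, hM]; ring
    have hc := Real.convexOn_mul_log
    have h1 := hc.2 (Set.mem_Ici.2 hL.le) (Set.mem_Ici.2 (by linarith : (0:ℝ) ≤ M)) ht0
      (by linarith : 0 ≤ 1 - t) (by ring)
    have h2 := hc.2 (Set.mem_Ici.2 hL.le) (Set.mem_Ici.2 (by linarith : (0:ℝ) ≤ M))
      (by linarith : 0 ≤ 1 - t) ht0 (by ring)
    simp only [smul_eq_mul] at h1 h2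
    rw [hta] at h1; rw [htb] at h2
    nlinarith [h1, h2]

lemma nat_pow_eq_exp (n : ℕ) (hn : 1 ≤ n) :
    ((n : ℝ)) ^ n = Real.exp (n * Real.log n) := by
  have hn' : (0:ℝ) < n := by exact_mod_cast hn
  rw [← Real.rpow_natCast, Real.rpow_def_of_pos hn', mul_comm]

lemma nat_two (L a b : ℕ) (hL : 1 ≤ L) (ha : L ≤ a) (hb : L ≤ b) :
    a ^ a * b ^ b ≤ L ^ L * (a + b - L) ^ (a + b - L) := by
  set M := a + b - L with hMdef
  have hMb : b ≤ M := by omega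
  have hM1 : 1 ≤ M := le_trans hL (le_trans hb hMb)
  have key : (a:ℝ) ^ a * (b:ℝ) ^ b ≤ (L:ℝ) ^ L * (M:ℝ) ^ M := by
    rw [nat_pow_eq_exp a (le_trans hL ha), nat_pow_eq_exp b (le_trans hL hb),
      nat_pow_eq_exp L hL, nat_pow_eq_exp M hM1, ← Real.exp_add, ← Real.exp_add,
      Real.exp_le_exp]
    have hMcast : (M:ℝ) = (a:ℝ) + (b:ℝ) - (L:ℝ) := by
      rw [hMdef]; push_cast [Nat.cast_sub (by omega : L ≤ a + b)]; ring
    rw [hMcast]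
    exact real_two (L:ℝ) (a:ℝ) (b:ℝ) (by exact_mod_cast hL)
      (by exact_mod_cast ha) (by exact_mod_cast hb)
  exact_mod_cast (by push_cast; exact key : ((a ^ a * b ^ b : ℕ) : ℝ) ≤ ((L ^ L * M ^ M : ℕ) : ℝ))

/-- **Extremal product lemma** (Lemma A.2): for positive integers `x₁, …, x_k ≥ L`
with sum `S`, the product `∏ xᵢ^{xᵢ}` is at most `L^{(k-1)L} (S-(k-1)L)^{S-(k-1)L}`. -/
theorem prod_pow_self_le (L k : ℕ) (hL : 1 ≤ L) (hk : 1 ≤ k)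
    (x : Fin k → ℕ) (hx : ∀ i, L ≤ x i) :
    (∏ i, (x i) ^ (x i)) ≤
      L ^ ((k - 1) * L) * ((∑ i, x i) - (k - 1) * L) ^ ((∑ i, x i) - (k - 1) * L) := by
  induction k with
  | zero => omega
  | succ n ih =>
    rcases Nat.eq_zero_or_pos n with rfl | hn
    · simp
    · have IH := ih hn (fun i => x i.succ) (fun i => hx i.succ)
      rw [Fin.prod_univ_succ, Fin.sum_univ_succ]
      set S' := ∑ i : Fin n, x i.succ with hS'def
      have hS' : n * L ≤ S' := by
        rw [hS'def]
        calc n * L = ∑ _i : Fin n, L := by simp [mul_comm]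
          _ ≤ _ := Finset.sum_le_sum (fun i _ => hx i.succ)
      set T := S' - (n - 1) * L with hTdef
      have hcL : (n - 1) * L + L = n * L := by
        cases n with
        | zero => omega
        | succ m => simp [Nat.succ_sub_one, Nat.succ_mul]
      have hT : L ≤ T := by
        rw [hTdef]
        omega
      calc x 0 ^ x 0 * ∏ i : Fin n, x i.succ ^ x i.succ
          ≤ x 0 ^ x 0 * (L ^ ((n - 1) * L) * T ^ T) := Nat.mul_le_mul_left _ IH
        _ = L ^ ((n - 1) * L) * (x 0 ^ x 0 * T ^ T) := by ring
        _ ≤ L ^ ((n - 1) * L) * (L ^ L * (x 0 + T - L) ^ (x 0 + T - L)) :=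
            Nat.mul_le_mul_left _ (nat_two L (x 0) T hL (hx 0) hT)
        _ = L ^ ((n - 1) * L + L) * (x 0 + T - L) ^ (x 0 + T - L) := by
            rw [pow_add]; ring
        _ = L ^ ((n + 1 - 1) * L) * (x 0 + S' - (n + 1 - 1) * L) ^ (x 0 + S' - (n + 1 - 1) * L) := by
            rw [hcL, hTdef]
            have h1 : x 0 + (S' - (n - 1) * L) - L = x 0 + S' - (n + 1 - 1) * L := by
              have h2 : (n - 1) * L ≤ S' := by omega
              simp only [Nat.add_sub_cancel]
              omega
            rw [h1, Nat.add_sub_cancel]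
end
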